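/- arXiv:1005.0451 — 10 statements merged into one kernel-verified Lean document; each statement's English description precedes it below -/
import Mathlib

section
/- Let f : I° ⊆ ℝ → ℝ be a twice differentiable function on I°, the interior of an interval I, and let a, b ∈ I° with a < b. If f'' is Lebesgue integrable on [a,b], then (1/(b-a)) ∫_a^b f(x) dx − f((a+b)/2) = ((b-a)²/4) ∫_0^1 m(t) [f''(t·a + (1-t)·b) + f''(t·b + (1-t)·a)] dt, where m(t) = t² for t ∈ [0, 1/2) and m(t) = (1-t)² for t ∈ [1/2, 1]. -/
/-!
The substitution `x = a + (b - a) t` reduces the identity to `[0, 1]`, where `m` is symmetric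
under `t ↦ 1 - t`, so the right-hand side becomes `(1 / 2) ∫₀¹ m g''`. On `[0, 1/2]` and
`[1/2, 1]` two integrations by parts against `t ^ 2`, resp. `(1 - t) ^ 2`, turn this into
`2 ∫₀¹ g - 2 g (1/2)`: the boundary terms `± g' (1/2) / 4` cancel.
-/

open MeasureTheory Set intervalIntegral

noncomputable def midpointKernel (t : ℝ) : ℝ :=
  if t < 1 / 2 then t ^ 2 else (1 - t) ^ 2

lemma midpointKernel_of_le {t : ℝ} (ht : t ≤ 1 / 2) : midpointKernel t = t ^ 2 := by
  rcases ht.lt_or_eq with ht | rfl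
  · exact if_pos ht
  · norm_num [midpointKernel]

lemma midpointKernel_of_ge {t : ℝ} (ht : 1 / 2 ≤ t) : midpointKernel t = (1 - t) ^ 2 :=
  if_neg ht.not_gt

lemma midpointKernel_eq_min_sq (t : ℝ) : midpointKernel t = min t (1 - t) ^ 2 := by
  rcases le_total t (1 / 2) with ht | ht
  · rw [midpointKernel_of_le ht, min_eq_left (by linarith)]
  · rw [midpointKernel_of_ge ht, min_eq_right (by linarith)]

lemma continuous_midpointKernel : Continuous midpointKernel := by
  simp only [funext midpointKernel_eq_min_sq]
  fun_prop

lemma midpointKernel_one_sub (t : ℝ) : midpointKernel (1 - t) = midpointKernel t := by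
  simp only [midpointKernel_eq_min_sq, sub_sub_cancel, min_comm]

theorem integral_sub_sq_mul_of_hasDerivAt {g g' g'' : ℝ → ℝ} {p q : ℝ}
    (hg : ∀ t ∈ uIcc p q, HasDerivAt g (g' t) t)
    (hg' : ∀ t ∈ uIcc p q, HasDerivAt g' (g'' t) t)
    (hg'' : IntervalIntegrable g'' volume p q) :
    ∫ t in p..q, (t - p) ^ 2 * g'' t =
      (q - p) ^ 2 * g' q - 2 * (q - p) * g q + 2 * ∫ t in p..q, g t := by
  have hsq : ∀ t ∈ uIcc p q, HasDerivAt (fun t => (t - p) ^ 2) (2 * (t - p)) t := fun t _ => by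
    simpa using ((hasDerivAt_id t).sub_const p).fun_pow 2
  have hlin : ∀ t ∈ uIcc p q, HasDerivAt (fun t => 2 * (t - p)) 2 t := fun t _ => by
    simpa using ((hasDerivAt_id t).sub_const p).const_mul 2
  have hg'_int : IntervalIntegrable g' volume p q :=
    ContinuousOn.intervalIntegrable fun t ht => (hg' t ht).continuousAt.continuousWithinAt
  have hlin_int : IntervalIntegrable (fun t => 2 * (t - p)) volume p q :=
    (by fun_prop : Continuous _).intervalIntegrable _ _
  rw [integral_mul_deriv_eq_deriv_mul hsq hg' hlin_int hg'',
    integral_mul_deriv_eq_deriv_mul hlin hg intervalIntegrable_const hg'_int,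
    intervalIntegral.integral_const_mul]
  ring

theorem integral_midpointKernel_mul_of_hasDerivAt {g g' g'' : ℝ → ℝ}
    (hg : ∀ t ∈ Icc (0 : ℝ) 1, HasDerivAt g (g' t) t)
    (hg' : ∀ t ∈ Icc (0 : ℝ) 1, HasDerivAt g' (g'' t) t)
    (hg'' : IntervalIntegrable g'' volume 0 1) :
    ∫ t in (0 : ℝ)..1, midpointKernel t * g'' t =
      2 * (∫ t in (0 : ℝ)..1, g t) - 2 * g (1 / 2) := by
  rw [← uIcc_of_le zero_le_one] at hg hg'
  have half_mem : (1 / 2 : ℝ) ∈ uIcc 0 1 := by norm_num [mem_uIcc]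
  have hsub₁ : uIcc (0 : ℝ) (1 / 2) ⊆ uIcc 0 1 := uIcc_subset_uIcc_left half_mem
  have hsub₂ : uIcc (1 : ℝ) (1 / 2) ⊆ uIcc 0 1 := uIcc_subset_uIcc right_mem_uIcc half_mem
  have hKg : IntervalIntegrable (fun t => midpointKernel t * g'' t) volume 0 1 :=
    hg''.continuousOn_mul continuous_midpointKernel.continuousOn
  have hg_int : IntervalIntegrable g volume 0 1 :=
    ContinuousOn.intervalIntegrable fun t ht => (hg t ht).continuousAt.continuousWithinAt
  have left : ∫ t in (0 : ℝ)..1 / 2, midpointKernel t * g'' t =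
      ∫ t in (0 : ℝ)..1 / 2, (t - 0) ^ 2 * g'' t :=
    integral_congr fun t ht => by
      rw [uIcc_of_le (by norm_num)] at ht
      rw [midpointKernel_of_le ht.2, sub_zero]
  have right : ∫ t in (1 / 2 : ℝ)..1, midpointKernel t * g'' t =
      -∫ t in (1 : ℝ)..1 / 2, (t - 1) ^ 2 * g'' t := by
    rw [integral_symm]
    refine congrArg _ (integral_congr fun t ht => ?_)
    rw [uIcc_of_ge (by norm_num)] at ht
    rw [midpointKernel_of_ge ht.1, sub_sq_comm]
  rw [← integral_add_adjacent_intervals (hKg.mono_set hsub₁) (hKg.mono_set hsub₂).symm,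
    ← integral_add_adjacent_intervals (hg_int.mono_set hsub₁) (hg_int.mono_set hsub₂).symm,
    left, right, integral_symm 1 (1 / 2),
    integral_sub_sq_mul_of_hasDerivAt (fun t ht => hg t (hsub₁ ht))
      (fun t ht => hg' t (hsub₁ ht)) (hg''.mono_set hsub₁),
    integral_sub_sq_mul_of_hasDerivAt (fun t ht => hg t (hsub₂ ht))
      (fun t ht => hg' t (hsub₂ ht)) (hg''.mono_set hsub₂)]
  ring

theorem integral_midpointKernel_mul_add_comp_one_sub {h : ℝ → ℝ}
    (hh : IntervalIntegrable h volume 0 1) :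
    ∫ t in (0 : ℝ)..1, midpointKernel t * (h t + h (1 - t)) =
      2 * ∫ t in (0 : ℝ)..1, midpointKernel t * h t := by
  have hK : ContinuousOn midpointKernel (uIcc 0 1) := continuous_midpointKernel.continuousOn
  have hh' : IntervalIntegrable (fun t => h (1 - t)) volume 0 1 := by
    simpa using (hh.comp_sub_left 1).symm
  have reflect : ∫ t in (0 : ℝ)..1, midpointKernel t * h (1 - t) =
      ∫ t in (0 : ℝ)..1, midpointKernel t * h t :=
    calc _ = ∫ t in (0 : ℝ)..1, midpointKernel (1 - t) * h (1 - t) := by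
          simp only [midpointKernel_one_sub]
      _ = _ := by
          simpa using integral_comp_sub_left (a := 0) (b := 1) (midpointKernel * h) 1
  simp_rw [mul_add]
  rw [integral_add (hh.continuousOn_mul hK) (hh'.continuousOn_mul hK), reflect, two_mul]

theorem integral_sub_eq_integral_midpointKernel_mul_of_hasDerivAt {g g' g'' : ℝ → ℝ}
    (hg : ∀ t ∈ Icc (0 : ℝ) 1, HasDerivAt g (g' t) t)
    (hg' : ∀ t ∈ Icc (0 : ℝ) 1, HasDerivAt g' (g'' t) t)
    (hg'' : IntervalIntegrable g'' volume 0 1) :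
    (∫ t in (0 : ℝ)..1, g t) - g (1 / 2) =
      1 / 4 * ∫ t in (0 : ℝ)..1, midpointKernel t * (g'' t + g'' (1 - t)) := by
  rw [integral_midpointKernel_mul_add_comp_one_sub hg'',
    integral_midpointKernel_mul_of_hasDerivAt hg hg' hg'']
  ring

theorem hermite_hadamard_second_deriv_identity
    (I : Set ℝ) (hI : I.OrdConnected) (f f' f'' : ℝ → ℝ) (a b : ℝ)
    (ha : a ∈ interior I) (hb : b ∈ interior I) (hab : a < b)
    (hderiv1 : ∀ x ∈ interior I, HasDerivAt f (f' x) x)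
    (hderiv2 : ∀ x ∈ interior I, HasDerivAt f' (f'' x) x)
    (hint : IntervalIntegrable f'' volume a b) :
    (1 / (b - a)) * (∫ x in a..b, f x) - f ((a + b) / 2) =
      (b - a) ^ 2 / 4 *
        ∫ t in (0:ℝ)..1,
          (if t < 1 / 2 then t ^ 2 else (1 - t) ^ 2) *
            (f'' (t * a + (1 - t) * b) + f'' (t * b + (1 - t) * a)) := by
  have hc : b - a ≠ 0 := (sub_pos.2 hab).ne'
  have hmem : ∀ t ∈ Icc (0 : ℝ) 1, (b - a) * t + a ∈ interior I := fun t ht =>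
    hI.interior.out ha hb ⟨by nlinarith [ht.1], by nlinarith [ht.2]⟩
  have hline : ∀ t : ℝ, HasDerivAt (fun t => (b - a) * t + a) (b - a) t := fun t => by
    simpa using ((hasDerivAt_id t).const_mul (b - a)).add_const a
  have hg : ∀ t ∈ Icc (0 : ℝ) 1,
      HasDerivAt (fun t => f ((b - a) * t + a)) ((b - a) * f' ((b - a) * t + a)) t := fun t ht =>
    ((hderiv1 _ (hmem t ht)).comp t (hline t)).congr_deriv (mul_comm _ _)
  have hg' : ∀ t ∈ Icc (0 : ℝ) 1, HasDerivAt (fun t => (b - a) * f' ((b - a) * t + a))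
      ((b - a) ^ 2 * f'' ((b - a) * t + a)) t := fun t ht =>
    (((hderiv2 _ (hmem t ht)).comp t (hline t)).const_mul (b - a)).congr_deriv (by ring)
  have hg'' : IntervalIntegrable (fun t => (b - a) ^ 2 * f'' ((b - a) * t + a)) volume 0 1 := by
    simpa [hc] using ((hint.comp_add_right a).comp_mul_left (c := b - a)).const_mul ((b - a) ^ 2)
  have key := integral_sub_eq_integral_midpointKernel_mul_of_hasDerivAt hg hg' hg''
  rw [integral_comp_mul_add _ hc, smul_eq_mul, ← one_div, show (b - a) * 0 + a = a by ring,
    show (b - a) * 1 + a = b by ring, show (b - a) * (1 / 2) + a = (a + b) / 2 by ring] at key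
  rw [key, ← intervalIntegral.integral_const_mul, ← intervalIntegral.integral_const_mul]
  refine integral_congr fun t _ => ?_
  rw [midpointKernel, show (b - a) * t + a = t * b + (1 - t) * a by ring,
    show (b - a) * (1 - t) + a = t * a + (1 - t) * b by ring]
  ring
end

section
/- Let f : I ⊆ ℝ → ℝ be twice differentiable on the interior I° of I, with a, b ∈ I°, a < b, and f'' Lebesgue integrable on [a,b]. If |f''| is convex on [a,b], then |(1/(b-a)) ∫_a^b f(x) dx − f((a+b)/2)| ≤ ((b-a)²/24) · (|f''(a)| + |f''(b)|)/2. -/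
/-!
Integrating by parts twice against the Peano kernel `K` of the midpoint rule, `(x - a)² / 2` on
`[a, (a + b) / 2]` and `(x - b)² / 2` on `[(a + b) / 2, b]`, turns the midpoint error
`∫ f - (b - a) f((a + b) / 2)` into `∫ K f''`. Convexity bounds `|f''|` by its chord through
`|f''(a)|` and `|f''(b)|`, and integrating the kernel against that chord gives exactly
`(b - a)³ / 48 · (|f''(a)| + |f''(b)|)`.
-/

open MeasureTheory Set

theorem ConvexOn.sub_mul_le_of_mem_Icc {g : ℝ → ℝ} {a b x : ℝ} (hg : ConvexOn ℝ (Icc a b) g)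
    (hx : x ∈ Icc a b) : (b - a) * g x ≤ (b - x) * g a + (x - a) * g b := by
  rcases hx.1.eq_or_lt with rfl | hax
  · simp
  rcases hx.2.eq_or_lt with rfl | hxb
  · simp
  exact hg.secant_mono_aux1 (left_mem_Icc.2 (hax.trans hxb).le)
    (right_mem_Icc.2 (hax.trans hxb).le) hax hxb

theorem abs_integral_mul_le_integral_mul {k g h : ℝ → ℝ} {c d : ℝ} (hcd : c ≤ d)
    (hk : ∀ x ∈ Icc c d, 0 ≤ k x) (hgh : ∀ x ∈ Icc c d, |g x| ≤ h x)
    (hkh : IntervalIntegrable (fun x => k x * h x) volume c d) :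
    |∫ x in c..d, k x * g x| ≤ ∫ x in c..d, k x * h x := by
  rw [← Real.norm_eq_abs]
  refine intervalIntegral.norm_integral_le_of_norm_le hcd
    (Filter.Eventually.of_forall fun x hx => ?_) hkh
  have hx' : x ∈ Icc c d := Ioc_subset_Icc_self hx
  rw [Real.norm_eq_abs, abs_mul, abs_of_nonneg (hk x hx')]
  exact mul_le_mul_of_nonneg_left (hgh x hx') (hk x hx')

section TwiceDifferentiable

variable {f f' f'' : ℝ → ℝ}

theorem integral_sq_sub_div_two_mul_eq {c d : ℝ} (p : ℝ)
    (hf : ∀ x ∈ uIcc c d, HasDerivAt f (f' x) x)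
    (hf' : ∀ x ∈ uIcc c d, HasDerivAt f' (f'' x) x)
    (hf'' : IntervalIntegrable f'' volume c d) :
    ∫ x in c..d, (x - p) ^ 2 / 2 * f'' x =
      ((d - p) ^ 2 / 2 * f' d - (d - p) * f d) - ((c - p) ^ 2 / 2 * f' c - (c - p) * f c) +
        ∫ x in c..d, f x := by
  have hf'_int : IntervalIntegrable f' volume c d :=
    ContinuousOn.intervalIntegrable fun x hx => (hf' x hx).continuousAt.continuousWithinAt
  have hsub : ∀ x, HasDerivAt (fun y => y - p) 1 x := fun x => (hasDerivAt_id x).sub_const p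
  have hsq : ∀ x ∈ uIcc c d, HasDerivAt (fun y => (y - p) ^ 2 / 2) (x - p) x := fun x _ =>
    (((hsub x).pow 2).div_const 2).congr_deriv (by ring)
  rw [intervalIntegral.integral_mul_deriv_eq_deriv_mul hsq hf'
      ((continuous_sub_right p).intervalIntegrable c d) hf'',
    intervalIntegral.integral_mul_deriv_eq_deriv_mul (fun x _ => hsub x) hf
      intervalIntegrable_const hf'_int]
  simp only [one_mul]
  ring

theorem integral_sub_mul_midpoint_eq {a b : ℝ}
    (hf : ∀ x ∈ uIcc a b, HasDerivAt f (f' x) x)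
    (hf' : ∀ x ∈ uIcc a b, HasDerivAt f' (f'' x) x)
    (hf'' : IntervalIntegrable f'' volume a b) :
    (∫ x in a..b, f x) - (b - a) * f ((a + b) / 2) =
      (∫ x in a..(a + b) / 2, (x - a) ^ 2 / 2 * f'' x) +
        ∫ x in (a + b) / 2..b, (x - b) ^ 2 / 2 * f'' x := by
  have hm : (a + b) / 2 ∈ uIcc a b := by
    rcases le_total a b with h | h
    · exact mem_uIcc.2 (Or.inl ⟨by linarith, by linarith⟩)
    · exact mem_uIcc.2 (Or.inr ⟨by linarith, by linarith⟩)
  have hl : uIcc a ((a + b) / 2) ⊆ uIcc a b := uIcc_subset_uIcc_left hm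
  have hr : uIcc ((a + b) / 2) b ⊆ uIcc a b := uIcc_subset_uIcc_right hm
  have hf_int : IntervalIntegrable f volume a b :=
    ContinuousOn.intervalIntegrable fun x hx => (hf x hx).continuousAt.continuousWithinAt
  rw [integral_sq_sub_div_two_mul_eq a (fun x hx => hf x (hl hx)) (fun x hx => hf' x (hl hx))
      (hf''.mono_set hl),
    integral_sq_sub_div_two_mul_eq b (fun x hx => hf x (hr hx)) (fun x hx => hf' x (hr hx))
      (hf''.mono_set hr),
    ← intervalIntegral.integral_add_adjacent_intervals (hf_int.mono_set hl) (hf_int.mono_set hr)]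
  ring

end TwiceDifferentiable

theorem integral_midpoint_kernel_mul_affine (a b A B : ℝ) :
    (∫ x in a..(a + b) / 2, (x - a) ^ 2 / 2 * ((b - x) * A + (x - a) * B)) +
      ∫ x in (a + b) / 2..b, (x - b) ^ 2 / 2 * ((b - x) * A + (x - a) * B) =
      (b - a) ^ 4 / 48 * (A + B) := by
  have hl : ∀ x, (x - a) ^ 2 / 2 * ((b - x) * A + (x - a) * B) =
      (x - a) ^ 2 * ((b - a) * A / 2) + (x - a) ^ 3 * ((B - A) / 2) := fun x => by ring
  have hr : ∀ x, (x - b) ^ 2 / 2 * ((b - x) * A + (x - a) * B) =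
      (x - b) ^ 2 * ((b - a) * B / 2) + (x - b) ^ 3 * ((B - A) / 2) := fun x => by ring
  simp only [hl, hr]
  rw [intervalIntegral.integral_comp_sub_right
      (fun t => t ^ 2 * ((b - a) * A / 2) + t ^ 3 * ((B - A) / 2)),
    intervalIntegral.integral_comp_sub_right
      (fun t => t ^ 2 * ((b - a) * B / 2) + t ^ 3 * ((B - A) / 2))]
  simp only [sub_self, intervalIntegral.intervalIntegrable_pow, IntervalIntegrable.mul_const,
    intervalIntegral.integral_add, intervalIntegral.integral_mul_const, integral_pow, zero_pow,
    Nat.reduceAdd, Nat.cast_ofNat, ne_eq, OfNat.ofNat_ne_zero, not_false_eq_true, sub_zero, zero_sub]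
  ring

theorem hermite_hadamard_second_deriv_abs_convex
    (I : Set ℝ) (hI : I.OrdConnected) (f f' f'' : ℝ → ℝ) (a b : ℝ)
    (ha : a ∈ interior I) (hb : b ∈ interior I) (hab : a < b)
    (hderiv1 : ∀ x ∈ interior I, HasDerivAt f (f' x) x)
    (hderiv2 : ∀ x ∈ interior I, HasDerivAt f' (f'' x) x)
    (hint : IntervalIntegrable f'' volume a b)
    (hconv : ConvexOn ℝ (Set.Icc a b) (fun x => |f'' x|)) :
    |(1 / (b - a)) * (∫ x in a..b, f x) - f ((a + b) / 2)| ≤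
      (b - a) ^ 2 / 24 * ((|f'' a| + |f'' b|) / 2) := by
  have hsub : uIcc a b ⊆ interior I := by
    rw [uIcc_of_le hab.le]; exact hI.interior.out ha hb
  have hpos : 0 < b - a := sub_pos.2 hab
  set ℓ : ℝ → ℝ := fun x => (b - x) * |f'' a| + (x - a) * |f'' b|
  have hbound : ∀ x ∈ Icc a b, |f'' x| ≤ ℓ x / (b - a) := fun x hx => by
    rw [le_div_iff₀ hpos, mul_comm]; exact hconv.sub_mul_le_of_mem_Icc hx
  have hest : ∀ c d p, a ≤ c → c ≤ d → d ≤ b →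
      |∫ x in c..d, (x - p) ^ 2 / 2 * f'' x| ≤ (∫ x in c..d, (x - p) ^ 2 / 2 * ℓ x) / (b - a) := by
    intro c d p hac hcd hdb
    rw [← intervalIntegral.integral_div]
    simp only [mul_div_assoc]
    exact abs_integral_mul_le_integral_mul hcd (fun x _ => by positivity)
      (fun x hx => hbound x ⟨hac.trans hx.1, hx.2.trans hdb⟩)
      (Continuous.intervalIntegrable (by fun_prop) _ _)
  calc |(1 / (b - a)) * (∫ x in a..b, f x) - f ((a + b) / 2)|
      = |(∫ x in a..b, f x) - (b - a) * f ((a + b) / 2)| / (b - a) := by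
        rw [← abs_of_pos hpos, ← abs_div, abs_of_pos hpos]; congr 1; field_simp
    _ ≤ ((∫ x in a..(a + b) / 2, (x - a) ^ 2 / 2 * ℓ x) / (b - a) +
          (∫ x in (a + b) / 2..b, (x - b) ^ 2 / 2 * ℓ x) / (b - a)) / (b - a) := by
        rw [integral_sub_mul_midpoint_eq (fun x hx => hderiv1 x (hsub hx))
          (fun x hx => hderiv2 x (hsub hx)) hint]
        gcongr
        exact (abs_add_le _ _).trans (add_le_add (hest _ _ _ le_rfl (by linarith) (by linarith))
          (hest _ _ _ (by linarith) (by linarith) le_rfl))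
    _ = (b - a) ^ 2 / 24 * ((|f'' a| + |f'' b|) / 2) := by
        rw [← add_div, integral_midpoint_kernel_mul_affine]
        field_simp
        ring
end

section
/- Let f : I ⊆ ℝ → ℝ be twice differentiable on the interior I° of I, with a, b ∈ I°, a < b, and f'' Lebesgue integrable on [a,b]. Let q > 1 and p > 1 with 1/p + 1/q = 1. If |f''|^q is convex on [a,b], then |(1/(b-a)) ∫_a^b f(x) dx − f((a+b)/2)| ≤ ((b-a)²/(8·(2p+1)^{1/p})) · [(|f''(a)|^q + |f''(b)|^q)/2]^{1/q}. -/
/-! With the Peano kernel `K x = min (x - a) (b - x) ^ 2 / 2` of the midpoint rule, two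
integrations by parts give `∫ K f'' = ∫ f - (b - a) f ((a + b) / 2)` over `[a, b]`. Hölder's
inequality bounds `|∫ K f''|` by `‖K‖_p ‖f''‖_q`; the first factor is computed explicitly, and
the right Hermite–Hadamard (trapezoid) inequality for the convex function `|f''| ^ q` gives
`∫ |f''| ^ q ≤ (b - a) (|f'' a| ^ q + |f'' b| ^ q) / 2`. -/

open MeasureTheory Set

theorem integral_sub_sq_div_two_mul_second_deriv {f f' f'' : ℝ → ℝ} {c d e : ℝ}
    (hf : ∀ x ∈ uIcc c d, HasDerivAt f (f' x) x) (hf' : ∀ x ∈ uIcc c d, HasDerivAt f' (f'' x) x)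
    (hf'' : IntervalIntegrable f'' volume c d) :
    ∫ x in c..d, (x - e) ^ 2 / 2 * f'' x =
      ((d - e) ^ 2 / 2 * f' d - (d - e) * f d) - ((c - e) ^ 2 / 2 * f' c - (c - e) * f c) +
        ∫ x in c..d, f x := by
  have hderiv : ∀ x ∈ uIcc c d, HasDerivAt (fun x => (x - e) ^ 2 / 2 * f' x - (x - e) * f x)
      ((x - e) ^ 2 / 2 * f'' x - f x) x := by
    intro x hx
    have hlin := (hasDerivAt_id' x).sub_const e
    refine ((((hlin.pow 2).div_const 2).mul (hf' x hx)).sub (hlin.mul (hf x hx))).congr_deriv ?_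
    simp only [Pi.pow_apply]
    ring
  have hweighted : IntervalIntegrable (fun x => (x - e) ^ 2 / 2 * f'' x) volume c d :=
    hf''.continuousOn_mul (by fun_prop)
  have hfint : IntervalIntegrable f volume c d :=
    ContinuousOn.intervalIntegrable fun x hx => (hf x hx).continuousAt.continuousWithinAt
  have := intervalIntegral.integral_eq_sub_of_hasDerivAt hderiv (hweighted.sub hfint)
  rw [intervalIntegral.integral_sub hweighted hfint] at this
  linarith

theorem integral_comp_min_sub_sub {φ : ℝ → ℝ} (hφ : Continuous φ) {a b : ℝ} (hab : a ≤ b) :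
    ∫ x in a..b, φ (min (x - a) (b - x)) = 2 * ∫ y in 0..(b - a) / 2, φ y := by
  set m := (a + b) / 2 with hm
  have hcont : Continuous fun x => φ (min (x - a) (b - x)) := by fun_prop
  rw [← intervalIntegral.integral_add_adjacent_intervals (b := m) (hcont.intervalIntegrable _ _)
    (hcont.intervalIntegrable _ _)]
  have hleft : ∫ x in a..m, φ (min (x - a) (b - x)) = ∫ x in a..m, φ (x - a) := by
    refine intervalIntegral.integral_congr fun x hx => ?_
    rw [uIcc_of_le (by linarith [hm])] at hx
    simp only [min_eq_left (by linarith [hx.2, hm] : x - a ≤ b - x)]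
  have hright : ∫ x in m..b, φ (min (x - a) (b - x)) = ∫ x in m..b, φ (b - x) := by
    refine intervalIntegral.integral_congr fun x hx => ?_
    rw [uIcc_of_le (by linarith [hm])] at hx
    simp only [min_eq_right (by linarith [hx.1, hm] : b - x ≤ x - a)]
  rw [hleft, hright, intervalIntegral.integral_comp_sub_right,
    intervalIntegral.integral_comp_sub_left, sub_self, sub_self, two_mul]
  congr 2 <;> ring

theorem ConvexOn.intervalIntegrable {g : ℝ → ℝ} {a b : ℝ} (hab : a ≤ b)
    (hg : ConvexOn ℝ (Icc a b) g) : IntervalIntegrable g volume a b := by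
  set M := max (g a) (g b)
  have ha : a ∈ Icc a b := left_mem_Icc.2 hab
  have hb : b ∈ Icc a b := right_mem_Icc.2 hab
  have hupper : ∀ x ∈ Icc a b, g x ≤ M := fun x hx => hg.le_max_of_mem_Icc ha hb hx
  -- convexity at the midpoint of `x` and its reflection `a + b - x` bounds `g x` from below
  have hlower : ∀ x ∈ Icc a b, 2 * g ((a + b) / 2) - M ≤ g x := by
    intro x hx
    have hx' : a + b - x ∈ Icc a b := ⟨by linarith [hx.2], by linarith [hx.1]⟩
    have h := hg.2 hx hx' (by norm_num : (0 : ℝ) ≤ 1 / 2) (by norm_num : (0 : ℝ) ≤ 1 / 2)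
      (by norm_num)
    simp only [smul_eq_mul] at h
    rw [show 1 / 2 * x + 1 / 2 * (a + b - x) = (a + b) / 2 by ring] at h
    linarith [hupper _ hx']
  rw [intervalIntegrable_iff_integrableOn_Ioo_of_le hab]
  refine IntegrableOn.of_bound measure_Ioo_lt_top
    ((hg.continuousOn_interior.mono ?_).aestronglyMeasurable measurableSet_Ioo)
    (|M| + 2 * |g ((a + b) / 2)|) ((ae_restrict_mem measurableSet_Ioo).mono fun x hx => ?_)
  · rw [interior_Icc]
  · have hx' := Ioo_subset_Icc_self hx
    rw [Real.norm_eq_abs, abs_le]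
    constructor <;> linarith [hupper x hx', hlower x hx', le_abs_self M, neg_abs_le M,
      neg_abs_le (g ((a + b) / 2)), le_abs_self (g ((a + b) / 2))]

theorem ConvexOn.intervalIntegral_le_trapezoid {g : ℝ → ℝ} {a b : ℝ} (hab : a ≤ b)
    (hg : ConvexOn ℝ (Icc a b) g) :
    ∫ x in a..b, g x ≤ (b - a) * ((g a + g b) / 2) := by
  rcases hab.eq_or_lt with rfl | hlt
  · simp
  have hchord : ∀ x ∈ Icc a b, g x ≤ (b - x) / (b - a) * g a + (x - a) / (b - a) * g b := by
    intro x hx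
    have h := hg.2 (left_mem_Icc.2 hab) (right_mem_Icc.2 hab)
      (div_nonneg (sub_nonneg.2 hx.2) (sub_pos.2 hlt).le)
      (div_nonneg (sub_nonneg.2 hx.1) (sub_pos.2 hlt).le)
      (by field_simp; ring)
    rwa [show ((b - x) / (b - a)) • a + ((x - a) / (b - a)) • b = x by
      simp only [smul_eq_mul]; field_simp; ring] at h
  calc ∫ x in a..b, g x
      ≤ ∫ x in a..b, ((b - x) / (b - a) * g a + (x - a) / (b - a) * g b) :=
        intervalIntegral.integral_mono_on hab (hg.intervalIntegrable hab)
          ((by fun_prop : Continuous _).intervalIntegrable _ _) hchord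
    _ = (b - a) * ((g a + g b) / 2) := by
        simp only [div_mul_eq_mul_div, ← add_div, intervalIntegral.integral_div]
        rw [intervalIntegral.integral_add ((by fun_prop : Continuous _).intervalIntegrable _ _)
            ((by fun_prop : Continuous _).intervalIntegrable _ _),
          intervalIntegral.integral_mul_const, intervalIntegral.integral_mul_const,
          intervalIntegral.integral_comp_sub_left (fun x => x),
          intervalIntegral.integral_comp_sub_right (fun x => x)]
        simp only [integral_id]
        field_simp
        ring

theorem abs_intervalIntegral_mul_le_Lp_mul_Lq {f g : ℝ → ℝ} {a b p q : ℝ} (hab : a ≤ b)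
    (hpq : p.HolderConjugate q) (hf : IntervalIntegrable f volume a b)
    (hg : IntervalIntegrable g volume a b)
    (hfp : IntervalIntegrable (fun x => |f x| ^ p) volume a b)
    (hgq : IntervalIntegrable (fun x => |g x| ^ q) volume a b) :
    |∫ x in a..b, f x * g x| ≤
      (∫ x in a..b, |f x| ^ p) ^ (1 / p) * (∫ x in a..b, |g x| ^ q) ^ (1 / q) := by
  have memLp {h : ℝ → ℝ} {r : ℝ} (hr : 0 < r) (hh : IntervalIntegrable h volume a b)
      (hhr : IntervalIntegrable (fun x => |h x| ^ r) volume a b) :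
      MemLp h (ENNReal.ofReal r) (volume.restrict (Ioc a b)) := by
    refine (integrable_norm_rpow_iff hh.1.aestronglyMeasurable (by simpa using hr)
      ENNReal.ofReal_ne_top).1 ?_
    simp only [ENNReal.toReal_ofReal hr.le, Real.norm_eq_abs]
    exact hhr.1
  simp only [intervalIntegral.integral_of_le hab]
  calc |∫ x in Ioc a b, f x * g x|
      ≤ ∫ x in Ioc a b, ‖f x‖ * ‖g x‖ := by
        rw [← Real.norm_eq_abs]
        simpa only [norm_mul] using norm_integral_le_integral_norm (fun x => f x * g x)
    _ ≤ _ := by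
        simpa only [Real.norm_eq_abs] using integral_mul_norm_le_Lp_mul_Lq hpq
          (memLp hpq.pos hf hfp) (memLp hpq.symm.pos hg hgq)

noncomputable def midpointPeanoKernel (a b x : ℝ) : ℝ := min (x - a) (b - x) ^ 2 / 2

theorem continuous_midpointPeanoKernel (a b : ℝ) : Continuous (midpointPeanoKernel a b) := by
  unfold midpointPeanoKernel
  fun_prop

theorem integral_midpointPeanoKernel_mul {f f' f'' : ℝ → ℝ} {a b : ℝ} (hab : a ≤ b)
    (hf : ∀ x ∈ Icc a b, HasDerivAt f (f' x) x) (hf' : ∀ x ∈ Icc a b, HasDerivAt f' (f'' x) x)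
    (hf'' : IntervalIntegrable f'' volume a b) :
    ∫ x in a..b, midpointPeanoKernel a b x * f'' x =
      (∫ x in a..b, f x) - (b - a) * f ((a + b) / 2) := by
  set m := (a + b) / 2 with hm
  have hma : a ≤ m := by linarith
  have hmb : m ≤ b := by linarith
  have hsub_left : uIcc a m ⊆ Icc a b := uIcc_subset_Icc ⟨le_rfl, hab⟩ ⟨hma, hmb⟩
  have hsub_right : uIcc m b ⊆ Icc a b := uIcc_subset_Icc ⟨hma, hmb⟩ ⟨hab, le_rfl⟩
  have hsub : ∀ {c d}, uIcc c d ⊆ Icc a b → uIcc c d ⊆ uIcc a b := fun h =>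
    (uIcc_of_le hab).symm ▸ h
  have hKf : IntervalIntegrable (fun x => midpointPeanoKernel a b x * f'' x) volume a b :=
    hf''.continuousOn_mul (continuous_midpointPeanoKernel a b).continuousOn
  have hleft : ∫ x in a..m, midpointPeanoKernel a b x * f'' x =
      ∫ x in a..m, (x - a) ^ 2 / 2 * f'' x := by
    refine intervalIntegral.integral_congr fun x hx => ?_
    rw [uIcc_of_le hma] at hx
    rw [midpointPeanoKernel, min_eq_left (by linarith [hx.2])]
  have hright : ∫ x in m..b, midpointPeanoKernel a b x * f'' x =
      ∫ x in m..b, (x - b) ^ 2 / 2 * f'' x := by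
    refine intervalIntegral.integral_congr fun x hx => ?_
    rw [uIcc_of_le hmb] at hx
    rw [midpointPeanoKernel, min_eq_right (by linarith [hx.1]), ← neg_sub x b, neg_sq]
  have hfint : IntervalIntegrable f volume a b :=
    ContinuousOn.intervalIntegrable fun x hx =>
      (hf x ((uIcc_of_le hab) ▸ hx)).continuousAt.continuousWithinAt
  rw [← intervalIntegral.integral_add_adjacent_intervals (hKf.mono_set (hsub hsub_left))
      (hKf.mono_set (hsub hsub_right)), hleft, hright,
    integral_sub_sq_div_two_mul_second_deriv (fun x hx => hf x (hsub_left hx))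
      (fun x hx => hf' x (hsub_left hx)) (hf''.mono_set (hsub hsub_left)),
    integral_sub_sq_div_two_mul_second_deriv (fun x hx => hf x (hsub_right hx))
      (fun x hx => hf' x (hsub_right hx)) (hf''.mono_set (hsub hsub_right)),
    ← intervalIntegral.integral_add_adjacent_intervals (hfint.mono_set (hsub hsub_left))
      (hfint.mono_set (hsub hsub_right))]
  ring

theorem integral_abs_midpointPeanoKernel_rpow {a b p : ℝ} (hab : a ≤ b) (hp : 0 ≤ p) :
    ∫ x in a..b, |midpointPeanoKernel a b x| ^ p =
      (b - a) ^ (2 * p + 1) / (8 ^ p * (2 * p + 1)) := by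
  have hφ : Continuous fun y : ℝ => |y ^ 2 / 2| ^ p :=
    (by fun_prop : Continuous fun y : ℝ => |y ^ 2 / 2|).rpow_const fun _ => Or.inr hp
  have hhalf : ∫ y in (0 : ℝ)..(b - a) / 2, |y ^ 2 / 2| ^ p =
      ∫ y in (0 : ℝ)..(b - a) / 2, y ^ (2 * p) / 2 ^ p := by
    refine intervalIntegral.integral_congr fun y hy => ?_
    rw [uIcc_of_le (by linarith)] at hy
    rw [abs_of_nonneg (by positivity), Real.div_rpow (sq_nonneg y) zero_le_two,
      ← Real.rpow_natCast, ← Real.rpow_mul hy.1, Nat.cast_ofNat]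
  simp only [midpointPeanoKernel]
  rw [integral_comp_min_sub_sub hφ hab, hhalf, intervalIntegral.integral_div,
    integral_rpow (Or.inl (by linarith)), Real.zero_rpow (by positivity), sub_zero,
    Real.div_rpow (by linarith) zero_le_two, Real.rpow_add_one two_ne_zero,
    show (8 : ℝ) = 2 ^ 2 * 2 by norm_num, Real.mul_rpow (by norm_num) zero_le_two,
    ← Real.rpow_natCast, ← Real.rpow_mul zero_le_two, Nat.cast_ofNat]
  field_simp

theorem integral_abs_midpointPeanoKernel_rpow_rpow_one_div {a b p : ℝ} (hab : a ≤ b)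
    (hp : 0 < p) :
    (∫ x in a..b, |midpointPeanoKernel a b x| ^ p) ^ (1 / p) =
      (b - a) ^ 2 * (b - a) ^ (1 / p) / (8 * (2 * p + 1) ^ (1 / p)) := by
  have hd : 0 ≤ b - a := sub_nonneg.2 hab
  rw [integral_abs_midpointPeanoKernel_rpow hab hp.le,
    Real.div_rpow (by positivity) (by positivity), Real.mul_rpow (by positivity) (by positivity),
    ← Real.rpow_mul hd, ← Real.rpow_mul (by norm_num : (0 : ℝ) ≤ 8), mul_one_div_cancel hp.ne',
    Real.rpow_one,
    show (2 * p + 1) * (1 / p) = 2 + 1 / p by field_simp, Real.rpow_add' hd (by positivity),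
    Real.rpow_two]

theorem abs_integral_midpointPeanoKernel_mul_le {g : ℝ → ℝ} {a b p q : ℝ} (hab : a ≤ b)
    (hpq : p.HolderConjugate q) (hg : IntervalIntegrable g volume a b)
    (hgq : IntervalIntegrable (fun x => |g x| ^ q) volume a b) :
    |∫ x in a..b, midpointPeanoKernel a b x * g x| ≤
      (b - a) ^ 2 * (b - a) ^ (1 / p) / (8 * (2 * p + 1) ^ (1 / p)) *
        (∫ x in a..b, |g x| ^ q) ^ (1 / q) := by
  have hK := continuous_midpointPeanoKernel a b
  rw [← integral_abs_midpointPeanoKernel_rpow_rpow_one_div hab hpq.pos]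
  exact abs_intervalIntegral_mul_le_Lp_mul_Lq hab hpq (hK.intervalIntegrable _ _) hg
    ((hK.abs.rpow_const fun _ => Or.inr hpq.nonneg).intervalIntegrable _ _) hgq

theorem hermite_hadamard_second_deriv_abs_pow_convex_holder_general
    (I : Set ℝ) (hI : I.OrdConnected) (f f' f'' : ℝ → ℝ) (a b : ℝ)
    (ha : a ∈ interior I) (hb : b ∈ interior I) (hab : a < b)
    (hderiv1 : ∀ x ∈ interior I, HasDerivAt f (f' x) x)
    (hderiv2 : ∀ x ∈ interior I, HasDerivAt f' (f'' x) x)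
    (hint : IntervalIntegrable f'' volume a b)
    (p q : ℝ) (hp : 1 < p) (hpq : 1 / p + 1 / q = 1)
    (hconv : ConvexOn ℝ (Set.Icc a b) (fun x => |f'' x| ^ q)) :
    |(1 / (b - a)) * (∫ x in a..b, f x) - f ((a + b) / 2)| ≤
      (b - a) ^ 2 / (8 * (2 * p + 1) ^ (1 / p)) *
        ((|f'' a| ^ q + |f'' b| ^ q) / 2) ^ (1 / q) := by
  have hd : 0 < b - a := sub_pos.2 hab
  have hpq' : p.HolderConjugate q := Real.holderConjugate_iff.2 ⟨hp, by simpa using hpq⟩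
  have hIcc : Icc a b ⊆ interior I := hI.interior.out ha hb
  set S := (|f'' a| ^ q + |f'' b| ^ q) / 2
  calc |(1 / (b - a)) * (∫ x in a..b, f x) - f ((a + b) / 2)|
      = |1 / (b - a) * ∫ x in a..b, midpointPeanoKernel a b x * f'' x| := by
        rw [integral_midpointPeanoKernel_mul hab.le (fun x hx => hderiv1 x (hIcc hx))
          (fun x hx => hderiv2 x (hIcc hx)) hint]
        field_simp
    _ = 1 / (b - a) * |∫ x in a..b, midpointPeanoKernel a b x * f'' x| := by
        rw [abs_mul, abs_of_pos (one_div_pos.2 hd)]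
    _ ≤ 1 / (b - a) * ((b - a) ^ 2 * (b - a) ^ (1 / p) / (8 * (2 * p + 1) ^ (1 / p)) *
          (∫ x in a..b, |f'' x| ^ q) ^ (1 / q)) := by
        gcongr
        exact abs_integral_midpointPeanoKernel_mul_le hab.le hpq' hint
          (hconv.intervalIntegrable hab.le)
    _ ≤ 1 / (b - a) * ((b - a) ^ 2 * (b - a) ^ (1 / p) / (8 * (2 * p + 1) ^ (1 / p)) *
          ((b - a) * S) ^ (1 / q)) := by
        gcongr
        · exact intervalIntegral.integral_nonneg hab.le fun _ _ => by positivity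
        · exact one_div_nonneg.2 hpq'.symm.nonneg
        · exact hconv.intervalIntegral_le_trapezoid hab.le
    _ = (b - a) ^ 2 / (8 * (2 * p + 1) ^ (1 / p)) * S ^ (1 / q) := by
        have hconj : (b - a) ^ (1 / p) * (b - a) ^ (1 / q) = b - a := by
          rw [← Real.rpow_add hd, hpq, Real.rpow_one]
        rw [Real.mul_rpow hd.le (by positivity)]
        field_simp
        rw [hconj]

theorem hermite_hadamard_second_deriv_abs_pow_convex_holder
    (I : Set ℝ) (hI : I.OrdConnected) (f f' f'' : ℝ → ℝ) (a b : ℝ)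
    (ha : a ∈ interior I) (hb : b ∈ interior I) (hab : a < b)
    (hderiv1 : ∀ x ∈ interior I, HasDerivAt f (f' x) x)
    (hderiv2 : ∀ x ∈ interior I, HasDerivAt f' (f'' x) x)
    (hint : IntervalIntegrable f'' volume a b)
    (p q : ℝ) (hp : 1 < p) (hq : 1 < q) (hpq : 1 / p + 1 / q = 1)
    (hconv : ConvexOn ℝ (Set.Icc a b) (fun x => |f'' x| ^ q)) :
    |(1 / (b - a)) * (∫ x in a..b, f x) - f ((a + b) / 2)| ≤
      (b - a) ^ 2 / (8 * (2 * p + 1) ^ (1 / p)) *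
        ((|f'' a| ^ q + |f'' b| ^ q) / 2) ^ (1 / q) :=
  hermite_hadamard_second_deriv_abs_pow_convex_holder_general I hI f f' f'' a b ha hb hab hderiv1
    hderiv2 hint p q hp hpq hconv
end

section
/- Let f : I ⊆ ℝ → ℝ be twice differentiable on the interior I° of I, with a, b ∈ I°, a < b, f'' Lebesgue integrable on [a,b], and |f''| quasi-convex on [a,b]. If moreover |f''| is decreasing on [a,b], then |(1/(b-a)) ∫_a^b f(x) dx − f((a+b)/2)| ≤ ((b-a)²/24) · |f''(a)|. -/
/-!
Write `m` for the midpoint and `h = (b - a) / 2`. Folding `[a, b]` about `m` turns the midpoint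
rule error `∫ f - (b - a) f(m)` into `∫₀ʰ (f(m + s) + f(m - s) - 2 f(m)) ds`. The integrand vanishes
at `s = 0` and its derivative `f'(m + s) - f'(m - s)` is at most `2 M s` in absolute value by the
mean value theorem, where `M` bounds `|f''|`; so the integrand is at most `M s²`, and integrating
gives `M h³ / 3 = M (b - a)³ / 24`. Since `|f''|` is decreasing, `M = |f''(a)|` will do.
-/

open MeasureTheory Set

theorem abs_sub_add_sub_le_mul_sq_of_abs_deriv2_le {f f' f'' : ℝ → ℝ} {m h M s : ℝ}
    (hf : ∀ x ∈ Icc (m - h) (m + h), HasDerivAt f (f' x) x)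
    (hf' : ∀ x ∈ Icc (m - h) (m + h), HasDerivAt f' (f'' x) x)
    (hM : ∀ x ∈ Icc (m - h) (m + h), |f'' x| ≤ M) (hs : s ∈ Icc 0 h) :
    |f (m + s) - f m + (f (m - s) - f m)| ≤ M * s ^ 2 := by
  have hmem : ∀ t ∈ Icc 0 h, m + t ∈ Icc (m - h) (m + h) ∧ m - t ∈ Icc (m - h) (m + h) :=
    fun t ht => ⟨⟨by linarith [ht.1, ht.2], by linarith [ht.2]⟩,
      ⟨by linarith [ht.2], by linarith [ht.1, ht.2]⟩⟩
  have hderiv : ∀ t ∈ Icc 0 h, HasDerivAt (fun t => f (m + t) - f m + (f (m - t) - f m))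
      (f' (m + t) - f' (m - t)) t := by
    intro t ht
    have hplus := (hf _ (hmem t ht).1).comp t ((hasDerivAt_id t).const_add m)
    have hminus := (hf _ (hmem t ht).2).comp t ((hasDerivAt_id t).const_sub m)
    simpa [sub_eq_add_neg] using (hplus.sub_const (f m)).fun_add (hminus.sub_const (f m))
  have hslope : ∀ t ∈ Icc 0 h, |f' (m + t) - f' (m - t)| ≤ M * (2 * t) := by
    intro t ht
    have := (convex_Icc (m - h) (m + h)).norm_image_sub_le_of_norm_hasDerivWithin_le
      (fun x hx => (hf' x hx).hasDerivWithinAt) hM (hmem t ht).2 (hmem t ht).1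
    simpa only [Real.norm_eq_abs, add_sub_sub_cancel, ← two_mul,
      abs_of_nonneg (by linarith [ht.1] : 0 ≤ 2 * t)] using this
  refine image_norm_le_of_norm_deriv_right_le_deriv_boundary (B := fun t => M * t ^ 2)
    (fun t ht => (hderiv t ht).continuousAt.continuousWithinAt)
    (fun t ht => (hderiv t (Ico_subset_Icc_self ht)).hasDerivWithinAt) (by simp)
    (fun t => by simpa using (hasDerivAt_pow 2 t).const_mul M)
    (fun t ht => hslope t (Ico_subset_Icc_self ht)) hs

theorem integral_sub_add_eq_integral_fold {f : ℝ → ℝ} {m h : ℝ}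
    (hleft : IntervalIntegrable f volume (m - h) m) (hright : IntervalIntegrable f volume m (m + h)) :
    ∫ x in m - h..m + h, f x = ∫ s in 0..h, (f (m + s) + f (m - s)) := by
  have hplus : IntervalIntegrable (fun s => f (m + s)) volume 0 h := by
    simpa using hright.comp_add_left m
  have hminus : IntervalIntegrable (fun s => f (m - s)) volume 0 h := by
    simpa using (hleft.comp_sub_left m).symm
  rw [intervalIntegral.integral_add hplus hminus, intervalIntegral.integral_comp_add_left,
    intervalIntegral.integral_comp_sub_left, add_zero, sub_zero,
    ← intervalIntegral.integral_add_adjacent_intervals hleft hright]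
  exact add_comm _ _

theorem abs_integral_sub_mul_midpoint_le {f f' f'' : ℝ → ℝ} {a b M : ℝ} (hab : a ≤ b)
    (hf : ∀ x ∈ Icc a b, HasDerivAt f (f' x) x) (hf' : ∀ x ∈ Icc a b, HasDerivAt f' (f'' x) x)
    (hM : ∀ x ∈ Icc a b, |f'' x| ≤ M) :
    |(∫ x in a..b, f x) - (b - a) * f ((a + b) / 2)| ≤ M * (b - a) ^ 3 / 24 := by
  obtain ⟨m, h, rfl, rfl⟩ : ∃ m h, a = m - h ∧ b = m + h := ⟨(a + b) / 2, (b - a) / 2, by ring, by ring⟩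
  have hh : 0 ≤ h := by linarith
  have hcont : ContinuousOn f (Icc (m - h) (m + h)) :=
    fun x hx => (hf x hx).continuousAt.continuousWithinAt
  have hsub : ∀ c d, c ∈ Icc (m - h) (m + h) → d ∈ Icc (m - h) (m + h) →
      IntervalIntegrable f volume c d :=
    fun c d hc hd => (hcont.mono (uIcc_subset_Icc hc hd)).intervalIntegrable
  have hm : m ∈ Icc (m - h) (m + h) := ⟨by linarith, by linarith⟩
  have hfold := integral_sub_add_eq_integral_fold (f := fun x => f x - f m)
    ((hsub _ _ (left_mem_Icc.2 hab) hm).sub intervalIntegrable_const)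
    ((hsub _ _ hm (right_mem_Icc.2 hab)).sub intervalIntegrable_const)
  have herror : (∫ x in m - h..m + h, f x) - (m + h - (m - h)) * f ((m - h + (m + h)) / 2) =
      ∫ s in 0..h, (f (m + s) - f m + (f (m - s) - f m)) := by
    rw [← hfold, intervalIntegral.integral_sub (hsub _ _ (left_mem_Icc.2 hab) (right_mem_Icc.2 hab))
      intervalIntegrable_const, intervalIntegral.integral_const,
      show (m - h + (m + h)) / 2 = m by ring, smul_eq_mul]
  rw [herror, show M * (m + h - (m - h)) ^ 3 / 24 = ∫ s in 0..h, M * s ^ 2 by simp; ring,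
    ← Real.norm_eq_abs]
  refine intervalIntegral.norm_integral_le_of_norm_le hh (ae_of_all _ fun s hs => ?_)
    ((by fun_prop : Continuous fun s : ℝ => M * s ^ 2).intervalIntegrable 0 h)
  exact abs_sub_add_sub_le_mul_sq_of_abs_deriv2_le hf hf' hM (Ioc_subset_Icc_self hs)

theorem hermite_hadamard_second_deriv_abs_quasiconvex_decreasing_general
    (I : Set ℝ) (hI : I.OrdConnected) (f f' f'' : ℝ → ℝ) (a b : ℝ)
    (ha : a ∈ interior I) (hb : b ∈ interior I) (hab : a < b)
    (hderiv1 : ∀ x ∈ interior I, HasDerivAt f (f' x) x)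
    (hderiv2 : ∀ x ∈ interior I, HasDerivAt f' (f'' x) x)
    (hanti : AntitoneOn (fun x => |f'' x|) (Set.Icc a b)) :
    |(1 / (b - a)) * (∫ x in a..b, f x) - f ((a + b) / 2)| ≤
      (b - a) ^ 2 / 24 * |f'' a| := by
  have hIcc : Icc a b ⊆ interior I := hI.interior.out ha hb
  have hM : ∀ x ∈ Icc a b, |f'' x| ≤ |f'' a| := fun x hx => hanti (left_mem_Icc.2 hab.le) hx hx.1
  have hba : 0 < b - a := sub_pos.2 hab
  have hmid := abs_integral_sub_mul_midpoint_le hab.le (fun x hx => hderiv1 x (hIcc hx))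
    (fun x hx => hderiv2 x (hIcc hx)) hM
  calc |(1 / (b - a)) * (∫ x in a..b, f x) - f ((a + b) / 2)|
      = |((∫ x in a..b, f x) - (b - a) * f ((a + b) / 2)) / (b - a)| := by
        congr 1
        field_simp
    _ = |(∫ x in a..b, f x) - (b - a) * f ((a + b) / 2)| / (b - a) := by
        rw [abs_div, abs_of_pos hba]
    _ ≤ |f'' a| * (b - a) ^ 3 / 24 / (b - a) := by gcongr
    _ = (b - a) ^ 2 / 24 * |f'' a| := by field_simp

theorem hermite_hadamard_second_deriv_abs_quasiconvex_decreasing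
    (I : Set ℝ) (hI : I.OrdConnected) (f f' f'' : ℝ → ℝ) (a b : ℝ)
    (ha : a ∈ interior I) (hb : b ∈ interior I) (hab : a < b)
    (hderiv1 : ∀ x ∈ interior I, HasDerivAt f (f' x) x)
    (hderiv2 : ∀ x ∈ interior I, HasDerivAt f' (f'' x) x)
    (hint : IntervalIntegrable f'' volume a b)
    (hqc : QuasiconvexOn ℝ (Set.Icc a b) (fun x => |f'' x|))
    (hanti : AntitoneOn (fun x => |f'' x|) (Set.Icc a b)) :
    |(1 / (b - a)) * (∫ x in a..b, f x) - f ((a + b) / 2)| ≤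
      (b - a) ^ 2 / 24 * |f'' a| :=
  hermite_hadamard_second_deriv_abs_quasiconvex_decreasing_general I hI f f' f'' a b ha hb hab
    hderiv1 hderiv2 hanti
end

section
/- Let a, b ∈ ℝ with 0 < a < b, and let q > 1 and p > 1 with 1/p + 1/q = 1. Then |ln(I(a,b)/A(a,b))| ≤ ((b−a)²/(8·a²·b²·(2p+1)^{1/p})) · [A(a^{2q}, b^{2q})]^{1/q}, i.e., ln((a+b)/2) − (1/(b−a))·(b·ln b − a·ln a) + 1 ≤ ((b−a)²/(8·a²·b²·(2p+1)^{1/p})) · [(a^{2q} + b^{2q})/2]^{1/q}. -/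
/-!
Put `x = (b - a) / (a + b)`, so that `b / A = 1 + x` and `a / A = 1 - x` for `A = (a + b) / 2`.
Then `ln (A / I) = 1 - h x / (2 x)` with `h x = (1 + x) ln (1 + x) - (1 - x) ln (1 - x)`, and
comparing derivatives gives `h x ≥ 2 x - x³ / (3 (1 - x²)²)`, i.e.
`ln (A / I) ≤ (b - a)² (a + b)² / (96 a² b²)`. The right-hand side of the theorem is at least this,
because `(2p + 1)^(1/p) ≤ 3` by Bernoulli's inequality and `((a + b) / 2)² ≤ A(a^{2q}, b^{2q})^{1/q}`
by convexity of `t ↦ t^{2q}`.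
-/

open Real Set

lemma hasDerivAt_one_add_mul_log_sub_one_sub_mul_log {x : ℝ} (hx₁ : -1 < x) (hx₂ : x < 1) :
    HasDerivAt (fun t ↦ (1 + t) * log (1 + t) - (1 - t) * log (1 - t))
      (log (1 - x ^ 2) + 2) x := by
  have hp : 1 + x ≠ 0 := by linarith
  have hm : 1 - x ≠ 0 := by linarith
  have h₁ : HasDerivAt (fun t ↦ 1 + t) 1 x := (hasDerivAt_id x).const_add 1
  have h₂ : HasDerivAt (fun t ↦ 1 - t) (-1) x := (hasDerivAt_id x).const_sub 1
  refine ((h₁.mul (h₁.log hp)).sub (h₂.mul (h₂.log hm))).congr_deriv ?_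
  rw [show 1 - x ^ 2 = (1 + x) * (1 - x) by ring, log_mul hp hm]
  field_simp
  ring

lemma hasDerivAt_pow_three_div {x : ℝ} (hx : x ^ 2 ≠ 1) :
    HasDerivAt (fun t ↦ t ^ 3 / (3 * (1 - t ^ 2) ^ 2))
      (x ^ 2 * (3 + x ^ 2) / (3 * (1 - x ^ 2) ^ 3)) x := by
  have hx' : 1 - x ^ 2 ≠ 0 := sub_ne_zero.2 (Ne.symm hx)
  have hden : HasDerivAt (fun t ↦ 3 * (1 - t ^ 2) ^ 2) (3 * (2 * (1 - x ^ 2) * -(2 * x))) x := by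
    simpa using (((hasDerivAt_pow 2 x).const_sub 1).pow 2).const_mul 3
  refine ((hasDerivAt_pow 3 x).div hden (by positivity)).congr_deriv ?_
  field_simp
  ring

lemma neg_log_one_sub_le {u : ℝ} (hu₀ : 0 ≤ u) (hu₁ : u < 1) :
    -log (1 - u) ≤ u * (3 + u) / (3 * (1 - u) ^ 3) := by
  have hpos : 0 < 1 - u := by linarith
  calc -log (1 - u) ≤ (1 - u)⁻¹ - 1 := by linarith [one_sub_inv_le_log_of_pos hpos]
    _ = u * (3 * (1 - u) ^ 2) / (3 * (1 - u) ^ 3) := by field_simp; ring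
    _ ≤ u * (3 + u) / (3 * (1 - u) ^ 3) := by
        gcongr
        nlinarith

lemma two_mul_sub_le_one_add_mul_log_sub_one_sub_mul_log {x : ℝ} (hx₀ : 0 ≤ x) (hx₁ : x < 1) :
    2 * x - x ^ 3 / (3 * (1 - x ^ 2) ^ 2) ≤ (1 + x) * log (1 + x) - (1 - x) * log (1 - x) := by
  set f : ℝ → ℝ := fun t ↦
    (1 + t) * log (1 + t) - (1 - t) * log (1 - t) - 2 * t + t ^ 3 / (3 * (1 - t ^ 2) ^ 2)
  have hf : ∀ t ∈ Icc 0 x, HasDerivAt f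
      (log (1 - t ^ 2) + t ^ 2 * (3 + t ^ 2) / (3 * (1 - t ^ 2) ^ 3)) t := by
    rintro t ⟨ht₀, htx⟩
    have ht₁ : t ^ 2 < 1 := by nlinarith
    refine ((((hasDerivAt_one_add_mul_log_sub_one_sub_mul_log (by linarith) (by linarith)).sub
      ((hasDerivAt_id t).const_mul 2))).add (hasDerivAt_pow_three_div ht₁.ne)).congr_deriv ?_
    ring
  have hmono : MonotoneOn f (Icc 0 x) := by
    refine monotoneOn_of_hasDerivWithinAt_nonneg (convex_Icc 0 x)
      (fun t ht ↦ (hf t ht).continuousAt.continuousWithinAt)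
      (fun t ht ↦ (hf t (interior_subset ht)).hasDerivWithinAt) fun t ht ↦ ?_
    obtain ⟨ht₀, htx⟩ := interior_subset ht
    linarith [neg_log_one_sub_le (sq_nonneg t) (by nlinarith : t ^ 2 < 1)]
  have := hmono ⟨le_rfl, hx₀⟩ ⟨hx₀, le_rfl⟩ hx₀
  norm_num [f] at this
  linarith

lemma log_add_div_two_sub_log_identric_le {a b : ℝ} (ha : 0 < a) (hab : a < b) :
    log ((a + b) / 2) - 1 / (b - a) * (b * log b - a * log a) + 1 ≤
      (b - a) ^ 2 * (a + b) ^ 2 / (96 * a ^ 2 * b ^ 2) := by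
  have hb : 0 < b := ha.trans hab
  have hd : 0 < b - a := sub_pos.2 hab
  set m := (a + b) / 2 with hm
  set x := (b - a) / (a + b) with hx
  have hm₀ : 0 < m := by positivity
  have key := two_mul_sub_le_one_add_mul_log_sub_one_sub_mul_log (x := x) (by positivity)
    (by rw [hx, div_lt_one (by positivity)]; linarith)
  have hplus : 1 + x = b / m := by rw [hx, hm]; field_simp; ring
  have hminus : 1 - x = a / m := by rw [hx, hm]; field_simp; ring
  have hsq : 1 - x ^ 2 = a * b / m ^ 2 := by rw [hx, hm]; field_simp; ring
  rw [hplus, hminus, hsq, log_div hb.ne' hm₀.ne', log_div ha.ne' hm₀.ne'] at key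
  have key' : (b - a) - (b - a) ^ 3 * (a + b) ^ 2 / (96 * a ^ 2 * b ^ 2) ≤
      b * log b - a * log a - (b - a) * log m := by
    calc (b - a) - (b - a) ^ 3 * (a + b) ^ 2 / (96 * a ^ 2 * b ^ 2)
        = m * (2 * x - x ^ 3 / (3 * (a * b / m ^ 2) ^ 2)) := by rw [hx, hm]; field_simp; ring
      _ ≤ m * (b / m * (log b - log m) - a / m * (log a - log m)) := by gcongr
      _ = b * log b - a * log a - (b - a) * log m := by field_simp; ring
  calc log m - 1 / (b - a) * (b * log b - a * log a) + 1
      = ((b - a) - (b * log b - a * log a - (b - a) * log m)) / (b - a) := by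
        field_simp; ring
    _ ≤ (b - a) ^ 3 * (a + b) ^ 2 / (96 * a ^ 2 * b ^ 2) / (b - a) := by gcongr; linarith
    _ = (b - a) ^ 2 * (a + b) ^ 2 / (96 * a ^ 2 * b ^ 2) := by field_simp

lemma two_mul_add_one_rpow_inv_le_three {p : ℝ} (hp : 1 ≤ p) : (2 * p + 1) ^ (1 / p) ≤ 3 := by
  have hbernoulli : 2 * p + 1 ≤ (3 : ℝ) ^ p := by
    have := one_add_mul_self_le_rpow_one_add (by norm_num : (-1 : ℝ) ≤ 2) hp
    norm_num at this
    linarith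
  calc (2 * p + 1) ^ (1 / p) ≤ ((3 : ℝ) ^ p) ^ (1 / p) := by gcongr
    _ = 3 := by rw [← rpow_mul (by norm_num), mul_one_div_cancel (by positivity), rpow_one]

lemma add_div_two_sq_le_rpow {a b q : ℝ} (ha : 0 ≤ a) (hb : 0 ≤ b) (hq : 1 ≤ 2 * q) :
    ((a + b) / 2) ^ 2 ≤ ((a ^ (2 * q) + b ^ (2 * q)) / 2) ^ (1 / q) := by
  have hq₀ : 0 < q := by linarith
  have hconvex := (convexOn_rpow hq).2 (mem_Ici.2 ha) (mem_Ici.2 hb)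
    (by norm_num : (0 : ℝ) ≤ 1 / 2) (by norm_num : (0 : ℝ) ≤ 1 / 2) (by norm_num)
  simp only [smul_eq_mul] at hconvex
  calc ((a + b) / 2) ^ 2 = (((a + b) / 2) ^ (2 * q)) ^ (1 / q) := by
        rw [← rpow_mul (by positivity), mul_one_div, mul_div_cancel_right₀ _ hq₀.ne', rpow_two]
    _ ≤ ((a ^ (2 * q) + b ^ (2 * q)) / 2) ^ (1 / q) := by
        gcongr
        rw [show (a + b) / 2 = 1 / 2 * a + 1 / 2 * b by ring]
        linarith

theorem identric_mean_arithmetic_mean_log_estimate_general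
    (a b : ℝ) (ha : 0 < a) (hab : a < b)
    (p q : ℝ) (hp : 1 < p) (hq : 1 < q) :
    Real.log ((a + b) / 2) -
        (1 / (b - a)) * (b * Real.log b - a * Real.log a) + 1 ≤
      (b - a) ^ 2 / (8 * a ^ 2 * b ^ 2 * (2 * p + 1) ^ (1 / p)) *
        ((a ^ (2 * q) + b ^ (2 * q)) / 2) ^ (1 / q) := by
  have hb : 0 < b := ha.trans hab
  calc _ ≤ (b - a) ^ 2 * (a + b) ^ 2 / (96 * a ^ 2 * b ^ 2) :=
        log_add_div_two_sub_log_identric_le ha hab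
    _ = (b - a) ^ 2 / (8 * a ^ 2 * b ^ 2 * 3) * ((a + b) / 2) ^ 2 := by ring
    _ ≤ _ := by
        gcongr
        · exact two_mul_add_one_rpow_inv_le_three hp.le
        · exact add_div_two_sq_le_rpow ha.le hb.le (by linarith)

theorem identric_mean_arithmetic_mean_log_estimate
    (a b : ℝ) (ha : 0 < a) (hab : a < b)
    (p q : ℝ) (hp : 1 < p) (hq : 1 < q) (hpq : 1 / p + 1 / q = 1) :
    Real.log ((a + b) / 2) -
        (1 / (b - a)) * (b * Real.log b - a * Real.log a) + 1 ≤
      (b - a) ^ 2 / (8 * a ^ 2 * b ^ 2 * (2 * p + 1) ^ (1 / p)) *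
        ((a ^ (2 * q) + b ^ (2 * q)) / 2) ^ (1 / q) :=
  identric_mean_arithmetic_mean_log_estimate_general a b ha hab p q hp hq
end

section
/- Let a, b ∈ ℝ with 0 < a < b, and let q > 1. Then |L^{-1}(a,b) − A^{-1}(a,b)| ≤ ((b−a)²/24) · (2^{(q−1)/q}/(a³·b³)) · [a^{3q} + b^{3q}]^{1/q}, i.e., |(ln b − ln a)/(b−a) − 2/(a+b)| ≤ ((b−a)²/24) · (2^{(q−1)/q}/(a³·b³)) · [a^{3q} + b^{3q}]^{1/q}. -/
/-!
`(log b - log a) / (b - a)` is the mean of `1 / t` over `[a, b]` and `2 / (a + b)` its value at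
the midpoint, so the difference is a midpoint-rule error. Substituting `x = b / a`, it is
squeezed between `0` and `(b - a) ^ 2 / 24 * (a⁻³ + b⁻³)` by two inequalities for `log x` on
`x ≥ 1`; each follows by monotonicity, since both derivatives carry the factor `(x - 1) ^ 2`.
The power-mean inequality `a³ + b³ ≤ 2 ^ (1 - 1/q) (a^{3q} + b^{3q}) ^ (1/q)` finishes.
-/

open Real Set

lemma le_of_hasDerivAt_nonneg {f f' : ℝ → ℝ} {a b : ℝ} (hab : a ≤ b)
    (hf : ∀ x ∈ Icc a b, HasDerivAt f (f' x) x) (hf' : ∀ x ∈ Ioo a b, 0 ≤ f' x) :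
    f a ≤ f b := by
  refine monotoneOn_of_hasDerivWithinAt_nonneg (f' := f') (convex_Icc a b)
    (fun x hx => (hf x hx).continuousAt.continuousWithinAt) (fun x hx => ?_) ?_
    (left_mem_Icc.2 hab) (right_mem_Icc.2 hab) hab
  · rw [interior_Icc] at hx
    exact (hf x (Ioo_subset_Icc_self hx)).hasDerivWithinAt
  · simpa only [interior_Icc] using hf'

lemma two_mul_sub_one_div_add_one_le_log {x : ℝ} (hx : 1 ≤ x) :
    2 * (x - 1) / (x + 1) ≤ log x := by
  have hderiv : ∀ y ∈ Icc 1 x, HasDerivAt (fun y => log y - 2 * (y - 1) / (y + 1))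
      ((y - 1) ^ 2 / (y * (y + 1) ^ 2)) y := by
    rintro y ⟨hy, -⟩
    have hy0 : y ≠ 0 := by positivity
    have hy1 : y + 1 ≠ 0 := by positivity
    have hid := hasDerivAt_id' y
    refine ((hasDerivAt_log hy0).sub (((hid.sub_const 1).const_mul 2).div (hid.add_const 1) hy1)
      ).congr_deriv ?_
    field_simp
    ring
  have := le_of_hasDerivAt_nonneg hx hderiv fun y ⟨hy, _⟩ => by positivity
  simpa [sub_nonneg] using this

lemma log_le_two_mul_sub_one_div_add_one_add {x : ℝ} (hx : 1 ≤ x) :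
    log x ≤ 2 * (x - 1) / (x + 1) + (x - 1) ^ 3 * (x ^ 3 + 1) / (24 * x ^ 3) := by
  have hderiv : ∀ y ∈ Icc 1 x, HasDerivAt
      (fun y => 2 * (y - 1) / (y + 1) + (y - 1) ^ 3 * (y ^ 3 + 1) / (24 * y ^ 3) - log y)
      ((y - 1) ^ 2 * ((y ^ 4 + 1) * (y + 1) ^ 2 - 8 * y ^ 3) / (8 * y ^ 4 * (y + 1) ^ 2)) y := by
    rintro y ⟨hy, -⟩
    have hy0 : y ≠ 0 := by positivity
    have hy1 : y + 1 ≠ 0 := by positivity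
    have hid := hasDerivAt_id' y
    refine ((((hid.sub_const 1).const_mul 2).div (hid.add_const 1) hy1).add
      ((((hid.sub_const 1).fun_pow 3).fun_mul ((hasDerivAt_pow 3 y).add_const 1)).div
        ((hasDerivAt_pow 3 y).const_mul 24) (by positivity))).sub (hasDerivAt_log hy0)
      |>.congr_deriv ?_
    field_simp
    ring
  have := le_of_hasDerivAt_nonneg hx hderiv fun y ⟨hy, _⟩ => by
    have hnum : 8 * y ^ 3 ≤ (y ^ 4 + 1) * (y + 1) ^ 2 := by
      nlinarith [mul_le_mul (two_mul_le_add_sq (y ^ 2) 1) (four_mul_le_sq_add y 1)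
        (by positivity) (by positivity)]
    exact div_nonneg (mul_nonneg (sq_nonneg _) (sub_nonneg.2 hnum)) (by positivity)
  simpa [sub_nonneg] using this

lemma add_le_two_rpow_mul_rpow_add_rpow {x y p : ℝ} (hx : 0 ≤ x) (hy : 0 ≤ y) (hp : 1 ≤ p) :
    x + y ≤ 2 ^ ((p - 1) / p) * (x ^ p + y ^ p) ^ (1 / p) := by
  have hp0 : p ≠ 0 := by positivity
  have hmean : (x + y) ^ p ≤ 2 ^ (p - 1) * (x ^ p + y ^ p) := by
    exact_mod_cast NNReal.rpow_add_le_mul_rpow_add_rpow ⟨x, hx⟩ ⟨y, hy⟩ hp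
  calc x + y = ((x + y) ^ p) ^ (1 / p) := by
        rw [← rpow_mul (by positivity), mul_one_div_cancel hp0, rpow_one]
    _ ≤ (2 ^ (p - 1) * (x ^ p + y ^ p)) ^ (1 / p) := by gcongr
    _ = 2 ^ ((p - 1) / p) * (x ^ p + y ^ p) ^ (1 / p) := by
        rw [mul_rpow (by positivity) (by positivity), ← rpow_mul zero_le_two, mul_one_div]


lemma two_div_add_le_log_sub_log_div_sub {a b : ℝ} (ha : 0 < a) (hab : a < b) :
    2 / (a + b) ≤ (log b - log a) / (b - a) := by
  have hb : 0 < b := ha.trans hab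
  have h := two_mul_sub_one_div_add_one_le_log ((one_le_div ha).2 hab.le)
  rw [log_div hb.ne' ha.ne'] at h
  rw [le_div_iff₀ (sub_pos.2 hab)]
  refine le_of_eq_of_le ?_ h
  field_simp
  ring

lemma log_sub_log_div_sub_le {a b : ℝ} (ha : 0 < a) (hab : a < b) :
    (log b - log a) / (b - a) ≤
      2 / (a + b) + (b - a) ^ 2 / 24 * ((a ^ 3 + b ^ 3) / (a ^ 3 * b ^ 3)) := by
  have hb : 0 < b := ha.trans hab
  have h := log_le_two_mul_sub_one_div_add_one_add ((one_le_div ha).2 hab.le)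
  rw [log_div hb.ne' ha.ne'] at h
  rw [div_le_iff₀ (sub_pos.2 hab)]
  refine le_of_le_of_eq h ?_
  field_simp
  ring

theorem logarithmic_mean_arithmetic_mean_inverse_estimate
    (a b : ℝ) (ha : 0 < a) (hab : a < b) (q : ℝ) (hq : 1 < q) :
    |(Real.log b - Real.log a) / (b - a) - 2 / (a + b)| ≤
      (b - a) ^ 2 / 24 * ((2 : ℝ) ^ ((q - 1) / q) / (a ^ 3 * b ^ 3)) *
        (a ^ (3 * q) + b ^ (3 * q)) ^ (1 / q) := by
  have hb : 0 < b := ha.trans hab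
  rw [abs_of_nonneg (sub_nonneg.2 (two_div_add_le_log_sub_log_div_sub ha hab))]
  have hpow_mean :=
    add_le_two_rpow_mul_rpow_add_rpow (pow_nonneg ha.le 3) (pow_nonneg hb.le 3) hq.le
  rw [← rpow_natCast_mul ha.le, ← rpow_natCast_mul hb.le, Nat.cast_ofNat] at hpow_mean
  calc (log b - log a) / (b - a) - 2 / (a + b)
      ≤ (b - a) ^ 2 / 24 * ((a ^ 3 + b ^ 3) / (a ^ 3 * b ^ 3)) := by
        linarith [log_sub_log_div_sub_le ha hab]
    _ ≤ (b - a) ^ 2 / 24 *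
          (2 ^ ((q - 1) / q) * (a ^ (3 * q) + b ^ (3 * q)) ^ (1 / q) / (a ^ 3 * b ^ 3)) := by
        gcongr
    _ = _ := by ring
end

section
/- Let a, b ∈ ℝ with 0 < a < b, and let q ≥ 1. Then |L^{-1}(a,b) − A^{-1}(a,b)| ≤ ((b−a)²/24) · (sup{(2/a³)^q, (2/b³)^q})^{1/q}, i.e., |(ln b − ln a)/(b−a) − 2/(a+b)| ≤ ((b−a)²/24) · (sup{(2/a³)^q, (2/b³)^q})^{1/q}. -/
/-!
With `a` fixed, both `x ↦ log x - 2 (x - a) / (a + x)` and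
`x ↦ 2 (x - a) / (a + x) + (x - a)³ / (12 a³) - log x` have nonnegative derivative on `[a, ∞)`;
the derivatives are `(x - a)² / (x (a + x)²)` and `(x - a)² (x (a + x)² - 4 a³) / (4 a³ x (a + x)²)`.
Evaluating at `x = b` and dividing by `b - a` gives
`0 ≤ L⁻¹(a, b) - A⁻¹(a, b) ≤ (b - a)² / (12 a³)`. As `t ↦ t ^ q` is monotone for `q > 0`, the
maximum is `(2 / a³) ^ q`, so the right-hand side of the estimate is exactly `(b - a)² / (12 a³)`.
-/

open Real Set

lemma le_of_hasDerivAt_nonneg_of_le {f f' : ℝ → ℝ} {a t : ℝ}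
    (hf : ∀ x, a ≤ x → HasDerivAt f (f' x) x) (hf' : ∀ x, a < x → 0 ≤ f' x) (ht : a ≤ t) :
    f a ≤ f t := by
  refine monotoneOn_of_hasDerivWithinAt_nonneg (f' := f') (convex_Ici a)
    (fun x hx => (hf x hx).continuousAt.continuousWithinAt) (fun x hx => ?_) (fun x hx => ?_)
    self_mem_Ici ht ht
  all_goals rw [interior_Ici] at hx
  · exact (hf x (le_of_lt hx)).hasDerivWithinAt
  · exact hf' x hx

lemma hasDerivAt_two_mul_sub_div_add {a x : ℝ} (hx : 0 < a + x) :
    HasDerivAt (fun y => 2 * (y - a) / (a + y)) (4 * a / (a + x) ^ 2) x := by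
  refine ((((hasDerivAt_id' x).sub_const a).const_mul 2).fun_div
    ((hasDerivAt_id' x).const_add a) hx.ne').congr_deriv ?_
  ring

lemma two_mul_sub_div_add_le_log_sub_log {a b : ℝ} (ha : 0 < a) (hab : a ≤ b) :
    2 * (b - a) / (a + b) ≤ log b - log a := by
  have key := le_of_hasDerivAt_nonneg_of_le (f := fun x => log x - 2 * (x - a) / (a + x))
    (f' := fun x => (x - a) ^ 2 / (x * (a + x) ^ 2))
    (fun x hx => by
      have hx0 : 0 < x := ha.trans_le hx
      refine ((hasDerivAt_log hx0.ne').sub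
        (hasDerivAt_two_mul_sub_div_add (a := a) (by linarith))).congr_deriv ?_
      field_simp
      ring)
    (fun x hx => by have : 0 < x := ha.trans hx; positivity) hab
  simp only [sub_self, mul_zero, zero_div, sub_zero] at key
  linarith

lemma log_sub_log_le_two_mul_sub_div_add_add {a b : ℝ} (ha : 0 < a) (hab : a ≤ b) :
    log b - log a ≤ 2 * (b - a) / (a + b) + (b - a) ^ 3 / (12 * a ^ 3) := by
  have key := le_of_hasDerivAt_nonneg_of_le
    (f := fun x => 2 * (x - a) / (a + x) + (x - a) ^ 3 / (12 * a ^ 3) - log x)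
    (f' := fun x => (x - a) ^ 2 * (x * (a + x) ^ 2 - 4 * a ^ 3) / (4 * a ^ 3 * x * (a + x) ^ 2))
    (fun x hx => by
      have hx0 : 0 < x := ha.trans_le hx
      have hcube : HasDerivAt (fun y => (y - a) ^ 3 / (12 * a ^ 3))
          (3 * (x - a) ^ 2 / (12 * a ^ 3)) x := by
        simpa using (((hasDerivAt_id x).sub_const a).pow 3).div_const (12 * a ^ 3)
      refine (((hasDerivAt_two_mul_sub_div_add (a := a) (by linarith)).add hcube).sub
        (hasDerivAt_log hx0.ne')).congr_deriv ?_
      field_simp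
      ring)
    (fun x hx => by
      have hx0 : 0 < x := ha.trans hx
      have : 4 * a ^ 3 ≤ x * (a + x) ^ 2 := by
        calc 4 * a ^ 3 = a * (a + a) ^ 2 := by ring
          _ ≤ x * (a + x) ^ 2 := by gcongr
      have : 0 ≤ x * (a + x) ^ 2 - 4 * a ^ 3 := by linarith
      positivity) hab
  simp only [sub_self, mul_zero, zero_div, zero_pow three_ne_zero, add_zero] at key
  linarith

theorem logarithmic_mean_arithmetic_mean_inverse_quasiconvex_estimate
    (a b : ℝ) (ha : 0 < a) (hab : a < b) (q : ℝ) (hq : 1 ≤ q) :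
    |(Real.log b - Real.log a) / (b - a) - 2 / (a + b)| ≤
      (b - a) ^ 2 / 24 *
        (max ((2 / a ^ 3) ^ q) ((2 / b ^ 3) ^ q)) ^ (1 / q) := by
  have hb : 0 < b := ha.trans hab
  have hba : 0 < b - a := by linarith
  have hmax : (max ((2 / a ^ 3) ^ q) ((2 / b ^ 3) ^ q)) ^ (1 / q) = 2 / a ^ 3 := by
    have hdiv : 2 / b ^ 3 ≤ 2 / a ^ 3 := by gcongr
    rw [← rpow_max (by positivity) (by positivity) (by linarith), max_eq_left hdiv, one_div,
      rpow_rpow_inv (by positivity) (by linarith)]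
  have hlower : 0 ≤ (log b - log a) / (b - a) - 2 / (a + b) := by
    rw [sub_nonneg, le_div_iff₀ hba]
    calc 2 / (a + b) * (b - a) = 2 * (b - a) / (a + b) := by ring
      _ ≤ log b - log a := two_mul_sub_div_add_le_log_sub_log ha hab.le
  have hupper : (log b - log a) / (b - a) - 2 / (a + b) ≤ (b - a) ^ 2 / (12 * a ^ 3) := by
    rw [sub_le_iff_le_add, div_le_iff₀ hba]
    calc log b - log a ≤ 2 * (b - a) / (a + b) + (b - a) ^ 3 / (12 * a ^ 3) :=
          log_sub_log_le_two_mul_sub_div_add_add ha hab.le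
      _ = ((b - a) ^ 2 / (12 * a ^ 3) + 2 / (a + b)) * (b - a) := by ring
  rw [hmax, abs_of_nonneg hlower]
  calc _ ≤ (b - a) ^ 2 / (12 * a ^ 3) := hupper
    _ = (b - a) ^ 2 / 24 * (2 / a ^ 3) := by ring
end

section
/- Let f : I° ⊆ ℝ → ℝ be a differentiable mapping on I°, the interior of an interval I, with a, b ∈ I°, a < b, and f' Lebesgue integrable on [a,b]. Then (1/(b−a)) ∫_a^b f(x) dx − f((a+b)/2) = (b−a) · [∫_0^{1/2} t·f'(t·a + (1−t)·b) dt + ∫_{1/2}^1 (t−1)·f'(t·a + (1−t)·b) dt]. -/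
/-!
With `g t = f (t * a + (1 - t) * b)`, so `g' t = (a - b) * f' (t * a + (1 - t) * b)`, integrate
by parts against the kernel equal to `t` on `[0, 1/2]` and to `t - 1` on `[1/2, 1]`: it has
derivative `1`, vanishes at `0` and `1` and drops by `1` at `1/2`, so the result is
`g (1/2) - ∫₀¹ g`. Substituting `x = t * a + (1 - t) * b` turns `∫₀¹ g` into the mean of `f` on
`[a, b]`.
-/

open MeasureTheory intervalIntegral Set
open scoped Interval

theorem integral_sub_mul_deriv {g g' : ℝ → ℝ} {x y c : ℝ}
    (hg : ∀ t ∈ [[x, y]], HasDerivAt g (g' t) t) (hg' : IntervalIntegrable g' volume x y) :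
    ∫ t in x..y, (t - c) * g' t = (y - c) * g y - (x - c) * g x - ∫ t in x..y, g t := by
  simpa using integral_mul_deriv_eq_deriv_mul (fun t _ ↦ (hasDerivAt_id t).sub_const c) hg
    intervalIntegrable_const hg'

theorem integral_peanoKernel_mul_deriv {g g' : ℝ → ℝ} {x m y : ℝ} (hm : m ∈ [[x, y]])
    (hg : ∀ t ∈ [[x, y]], HasDerivAt g (g' t) t) (hg' : IntervalIntegrable g' volume x y) :
    (∫ t in x..m, (t - x) * g' t) + ∫ t in m..y, (t - y) * g' t =
      (y - x) * g m - ∫ t in x..y, g t := by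
  have hxm := uIcc_subset_uIcc_left hm
  have hmy := uIcc_subset_uIcc_right hm
  have hcont : ContinuousOn g [[x, y]] := fun t ht ↦ (hg t ht).continuousAt.continuousWithinAt
  rw [integral_sub_mul_deriv (fun t ht ↦ hg t (hxm ht)) (hg'.mono_set hxm),
    integral_sub_mul_deriv (fun t ht ↦ hg t (hmy ht)) (hg'.mono_set hmy),
    ← integral_add_adjacent_intervals (hcont.mono hxm).intervalIntegrable
      (hcont.mono hmy).intervalIntegrable]
  ring

section ConvexCombination

variable {a b : ℝ}

theorem convex_combination_mem_uIcc {t : ℝ} (ht : t ∈ [[0, 1]]) :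
    t * a + (1 - t) * b ∈ [[a, b]] := by
  rw [uIcc_of_le zero_le_one] at ht
  rw [← segment_eq_uIcc]
  exact ⟨t, 1 - t, ht.1, sub_nonneg.2 ht.2, by ring, by simp only [smul_eq_mul]⟩

theorem hasDerivAt_comp_convex_combination {f f' : ℝ → ℝ} {t : ℝ}
    (hf : HasDerivAt f (f' (t * a + (1 - t) * b)) (t * a + (1 - t) * b)) :
    HasDerivAt (fun s ↦ f (s * a + (1 - s) * b)) ((a - b) * f' (t * a + (1 - t) * b)) t := by
  have hline := ((hasDerivAt_id t).mul_const (a - b)).add_const b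
  rw [one_mul] at hline
  rw [mul_comm]
  exact hf.comp t (hline.congr_of_eventuallyEq (.of_forall fun s ↦ by simp only [id]; ring))

theorem intervalIntegrable_comp_convex_combination {φ : ℝ → ℝ}
    (hφ : IntervalIntegrable φ volume a b) :
    IntervalIntegrable (fun t ↦ φ (t * a + (1 - t) * b)) volume 0 1 := by
  rcases eq_or_ne a b with rfl | hab
  · simp only [← add_mul, add_sub_cancel, one_mul]
    exact intervalIntegrable_const
  have hline (t : ℝ) : t * a + (1 - t) * b = (a - b) * t + b := by ring
  simpa [hline, div_self (sub_ne_zero.2 hab)] using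
    ((hφ.comp_add_right b).comp_mul_left (c := a - b)).symm

theorem integral_comp_convex_combination (f : ℝ → ℝ) (hab : a ≠ b) :
    ∫ t in (0 : ℝ)..1, f (t * a + (1 - t) * b) = (1 / (b - a)) * ∫ x in a..b, f x := by
  have hline (t : ℝ) : t * a + (1 - t) * b = (a - b) * t + b := by ring
  simp only [hline]
  rw [integral_comp_mul_add f (sub_ne_zero.2 hab), integral_symm]
  simp only [mul_one, sub_add_cancel, mul_zero, zero_add, smul_eq_mul, mul_neg, one_div]
  rw [← neg_sub b a, inv_neg, neg_mul, neg_neg]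

theorem average_sub_midpoint_eq_integral_peanoKernel_mul_deriv {f f' : ℝ → ℝ} (hab : a ≠ b)
    (hf : ∀ x ∈ [[a, b]], HasDerivAt f (f' x) x) (hf' : IntervalIntegrable f' volume a b) :
    (1 / (b - a)) * (∫ x in a..b, f x) - f ((a + b) / 2) =
      (b - a) *
        ((∫ t in (0:ℝ)..(1 / 2), t * f' (t * a + (1 - t) * b)) +
          ∫ t in (1 / 2 : ℝ)..1, (t - 1) * f' (t * a + (1 - t) * b)) := by
  have hg (t : ℝ) (ht : t ∈ [[0, 1]]) :=
    hasDerivAt_comp_convex_combination (hf _ (convex_combination_mem_uIcc ht))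
  have key := integral_peanoKernel_mul_deriv (m := 1 / 2)
    (by rw [uIcc_of_le zero_le_one]; norm_num) hg
    ((intervalIntegrable_comp_convex_combination hf').const_mul (a - b))
  rw [integral_comp_convex_combination f hab,
    show (1 / 2 : ℝ) * a + (1 - 1 / 2) * b = (a + b) / 2 by ring] at key
  simp only [sub_zero, one_mul, mul_left_comm _ (a - b), intervalIntegral.integral_const_mul] at key
  linear_combination key

end ConvexCombination

theorem hermite_hadamard_first_deriv_identity
    (I : Set ℝ) (hI : I.OrdConnected) (f f' : ℝ → ℝ) (a b : ℝ)
    (ha : a ∈ interior I) (hb : b ∈ interior I) (hab : a < b)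
    (hderiv : ∀ x ∈ interior I, HasDerivAt f (f' x) x)
    (hint : IntervalIntegrable f' volume a b) :
    (1 / (b - a)) * (∫ x in a..b, f x) - f ((a + b) / 2) =
      (b - a) *
        ((∫ t in (0:ℝ)..(1 / 2), t * f' (t * a + (1 - t) * b)) +
          ∫ t in (1 / 2 : ℝ)..1, (t - 1) * f' (t * a + (1 - t) * b)) := by
  have hsub : [[a, b]] ⊆ interior I := hI.interior.uIcc_subset ha hb
  exact average_sub_midpoint_eq_integral_peanoKernel_mul_deriv hab.ne
    (fun x hx ↦ hderiv x (hsub hx)) hint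
end

section
/- Let f : I ⊆ ℝ → ℝ be a differentiable mapping on the interior I° of I, with a, b ∈ I, a < b, and f' Lebesgue integrable on [a,b]. If |f'| is convex on [a,b], then |(1/(b−a)) ∫_a^b f(x) dx − f((a+b)/2)| ≤ ((b−a)/4) · (|f'(a)| + |f'(b)|)/2. -/
/-!
With `m = (a + b) / 2`, integrating by parts against `x - a` on `[a, m]` and against `x - b` on
`[m, b]` turns `(b - a) f(m) - ∫ f` into `∫ k f'` for this piecewise linear kernel `k`. Convexity
bounds `|f'|` by its secant line through `(a, |f' a|)` and `(b, |f' b|)`, and integrating `|k|`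
against that line gives `(b - a)² (|f' a| + |f' b|) / 8`. Since `f` need not be continuous at `a`
and `b`, it is first replaced by a primitive of `f'`, which agrees with `f` on `(a, b)`.
-/

open MeasureTheory Set intervalIntegral

theorem ConvexOn.le_secant {g : ℝ → ℝ} {a b x : ℝ} (hg : ConvexOn ℝ (Icc a b) g) (hab : a < b)
    (hx : x ∈ Icc a b) : g x ≤ ((b - x) * g a + (x - a) * g b) / (b - a) := by
  rcases hx.1.eq_or_lt with rfl | hax
  · rw [sub_self, zero_mul, add_zero, mul_div_cancel_left₀ _ (sub_pos.2 hab).ne']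
  have hslope := hg.secant_mono (left_mem_Icc.2 hab.le) hx (right_mem_Icc.2 hab.le) hax.ne'
    hab.ne' hx.2
  rw [div_le_div_iff₀ (sub_pos.2 hax) (sub_pos.2 hab)] at hslope
  rw [le_div_iff₀ (sub_pos.2 hab)]
  linarith

theorem integral_sub_mul_deriv_eq {F F' : ℝ → ℝ} {c d : ℝ} (p : ℝ) (hcd : c ≤ d)
    (hF : ContinuousOn F (Icc c d)) (hderiv : ∀ x ∈ Ioo c d, HasDerivAt F (F' x) x)
    (hint : IntervalIntegrable F' volume c d) :
    ∫ x in c..d, (x - p) * F' x = (d - p) * F d - (c - p) * F c - ∫ x in c..d, F x := by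
  rw [← uIcc_of_le hcd] at hF
  simpa using integral_mul_deriv_eq_deriv_mul_of_hasDerivAt (u' := fun _ => 1)
    (continuousOn_id.sub continuousOn_const) hF (fun x _ => (hasDerivAt_id x).sub_const p)
    (fun x hx => hderiv x (by rwa [min_eq_left hcd, max_eq_right hcd] at hx))
    intervalIntegrable_const hint

theorem integral_sub_mul_deriv_add_integral_sub_mul_deriv {F F' : ℝ → ℝ} {a b c : ℝ}
    (hc : c ∈ Icc a b) (hF : ContinuousOn F (Icc a b))
    (hderiv : ∀ x ∈ Ioo a b, HasDerivAt F (F' x) x) (hint : IntervalIntegrable F' volume a b) :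
    (∫ x in a..c, (x - a) * F' x) + ∫ x in c..b, (x - b) * F' x =
      (b - a) * F c - ∫ x in a..b, F x := by
  have hab : a ≤ b := hc.1.trans hc.2
  have hc' : c ∈ uIcc a b := by rwa [uIcc_of_le hab]
  have hFint : IntervalIntegrable F volume a b := hF.intervalIntegrable_of_Icc hab
  have hac : uIcc a c ⊆ uIcc a b := uIcc_subset_uIcc_left hc'
  have hcb : uIcc c b ⊆ uIcc a b := uIcc_subset_uIcc_right hc'
  rw [integral_sub_mul_deriv_eq a hc.1 (hF.mono (Icc_subset_Icc_right hc.2))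
      (fun x hx => hderiv x ⟨hx.1, hx.2.trans_le hc.2⟩) (hint.mono_set hac),
    integral_sub_mul_deriv_eq b hc.2 (hF.mono (Icc_subset_Icc_left hc.1))
      (fun x hx => hderiv x ⟨hc.1.trans_lt hx.1, hx.2⟩) (hint.mono_set hcb),
    ← integral_add_adjacent_intervals (hFint.mono_set hac) (hFint.mono_set hcb)]
  ring

theorem integral_sub_mul_secant_left_half (a b A B : ℝ) (hab : a ≠ b) :
    ∫ x in a..(a + b) / 2, (x - a) * (((b - x) * A + (x - a) * B) / (b - a)) =
      (b - a) ^ 2 * (2 * A + B) / 24 := by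
  have hba : b - a ≠ 0 := sub_ne_zero.2 hab.symm
  have hexpand : ∀ x, (x - a) * (((b - x) * A + (x - a) * B) / (b - a)) =
      A * (x - a) + (B - A) / (b - a) * (x - a) ^ 2 := fun x => by field_simp; ring
  simp only [hexpand]
  rw [intervalIntegral.integral_add (by apply Continuous.intervalIntegrable; fun_prop)
    (by apply Continuous.intervalIntegrable; fun_prop)]
  simp only [intervalIntegral.integral_const_mul, integral_comp_sub_right (fun x => x),
    integral_comp_sub_right (fun x => x ^ 2), integral_id, integral_pow]
  field_simp
  ring

theorem integral_sub_mul_secant_right_half (a b A B : ℝ) (hab : a ≠ b) :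
    ∫ x in (a + b) / 2..b, (b - x) * (((b - x) * A + (x - a) * B) / (b - a)) =
      (b - a) ^ 2 * (A + 2 * B) / 24 := by
  have hba : b - a ≠ 0 := sub_ne_zero.2 hab.symm
  have hexpand : ∀ x, (b - x) * (((b - x) * A + (x - a) * B) / (b - a)) =
      B * (b - x) + (A - B) / (b - a) * (b - x) ^ 2 := fun x => by field_simp; ring
  simp only [hexpand]
  rw [intervalIntegral.integral_add (by apply Continuous.intervalIntegrable; fun_prop)
    (by apply Continuous.intervalIntegrable; fun_prop)]
  simp only [intervalIntegral.integral_const_mul, integral_comp_sub_left (fun x => x),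
    integral_comp_sub_left (fun x => x ^ 2), integral_id, integral_pow]
  field_simp
  ring

theorem abs_integral_sub_mul_add_abs_integral_sub_mul_le {g : ℝ → ℝ} {a b : ℝ} (hab : a < b)
    (hconv : ConvexOn ℝ (Icc a b) fun x => |g x|) :
    |∫ x in a..(a + b) / 2, (x - a) * g x| + |∫ x in (a + b) / 2..b, (x - b) * g x| ≤
      (b - a) ^ 2 * (|g a| + |g b|) / 8 := by
  set m := (a + b) / 2 with hm
  have ham : a ≤ m := by rw [hm]; linarith
  have hmb : m ≤ b := by rw [hm]; linarith
  set secant : ℝ → ℝ := fun x => ((b - x) * |g a| + (x - a) * |g b|) / (b - a)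
  have hleft : |∫ x in a..m, (x - a) * g x| ≤ ∫ x in a..m, (x - a) * secant x := by
    rw [← Real.norm_eq_abs]
    refine norm_integral_le_of_norm_le (g := fun x => (x - a) * secant x) ham
      (ae_of_all volume fun x hx => ?_) (by apply Continuous.intervalIntegrable; fun_prop)
    rw [Real.norm_eq_abs, abs_mul, abs_of_nonneg (sub_nonneg.2 hx.1.le)]
    exact mul_le_mul_of_nonneg_left (hconv.le_secant hab ⟨hx.1.le, hx.2.trans hmb⟩)
      (sub_nonneg.2 hx.1.le)
  have hright : |∫ x in m..b, (x - b) * g x| ≤ ∫ x in m..b, (b - x) * secant x := by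
    rw [← Real.norm_eq_abs]
    refine norm_integral_le_of_norm_le (g := fun x => (b - x) * secant x) hmb
      (ae_of_all volume fun x hx => ?_) (by apply Continuous.intervalIntegrable; fun_prop)
    rw [Real.norm_eq_abs, abs_mul, abs_sub_comm, abs_of_nonneg (sub_nonneg.2 hx.2)]
    exact mul_le_mul_of_nonneg_left (hconv.le_secant hab ⟨ham.trans hx.1.le, hx.2⟩)
      (sub_nonneg.2 hx.2)
  rw [integral_sub_mul_secant_left_half a b _ _ hab.ne] at hleft
  rw [integral_sub_mul_secant_right_half a b _ _ hab.ne] at hright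
  linarith

theorem abs_average_sub_midpoint_le {F F' : ℝ → ℝ} {a b : ℝ} (hab : a < b)
    (hF : ContinuousOn F (Icc a b)) (hderiv : ∀ x ∈ Ioo a b, HasDerivAt F (F' x) x)
    (hint : IntervalIntegrable F' volume a b) (hconv : ConvexOn ℝ (Icc a b) fun x => |F' x|) :
    |(1 / (b - a)) * (∫ x in a..b, F x) - F ((a + b) / 2)| ≤
      (b - a) / 4 * ((|F' a| + |F' b|) / 2) := by
  have hba : 0 < b - a := sub_pos.2 hab
  have hm : (a + b) / 2 ∈ Icc a b := ⟨by linarith, by linarith⟩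
  calc |(1 / (b - a)) * (∫ x in a..b, F x) - F ((a + b) / 2)|
      = |((b - a) * F ((a + b) / 2) - ∫ x in a..b, F x) / (b - a)| := by
        rw [← abs_neg]
        congr 1
        field_simp
        ring
    _ = |(∫ x in a..(a + b) / 2, (x - a) * F' x) + ∫ x in (a + b) / 2..b, (x - b) * F' x| /
          (b - a) := by
        rw [integral_sub_mul_deriv_add_integral_sub_mul_deriv hm hF hderiv hint, abs_div,
          abs_of_pos hba]
    _ ≤ (|∫ x in a..(a + b) / 2, (x - a) * F' x| + |∫ x in (a + b) / 2..b, (x - b) * F' x|) /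
          (b - a) := by
        gcongr
        exact abs_add_le _ _
    _ ≤ (b - a) ^ 2 * (|F' a| + |F' b|) / 8 / (b - a) := by
        gcongr
        exact abs_integral_sub_mul_add_abs_integral_sub_mul_le hab hconv
    _ = (b - a) / 4 * ((|F' a| + |F' b|) / 2) := by
        field_simp
        ring

theorem exists_continuousOn_Icc_eqOn_Ioo {f f' : ℝ → ℝ} {a b : ℝ} (hab : a < b)
    (hderiv : ∀ x ∈ Ioo a b, HasDerivAt f (f' x) x) (hint : IntervalIntegrable f' volume a b) :
    ∃ F : ℝ → ℝ, ContinuousOn F (Icc a b) ∧ EqOn f F (Ioo a b) := by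
  obtain ⟨c, hc⟩ := nonempty_Ioo.2 hab
  refine ⟨fun x => f c + ∫ t in c..x, f' t, ?_, fun x hx => ?_⟩
  · have hc' : c ∈ uIcc a b := by rw [uIcc_of_le hab.le]; exact Ioo_subset_Icc_self hc
    rw [← uIcc_of_le hab.le]
    exact continuousOn_const.add (continuousOn_primitive_interval' hint hc')
  · have hcx : uIcc c x ⊆ Ioo a b := ordConnected_Ioo.uIcc_subset hc hx
    show f x = f c + ∫ t in c..x, f' t
    rw [integral_eq_sub_of_hasDerivAt (fun t ht => hderiv t (hcx ht))
      (hint.mono_set ((hcx.trans Ioo_subset_Icc_self).trans Icc_subset_uIcc))]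
    ring

theorem hermite_hadamard_first_deriv_abs_convex
    (I : Set ℝ) (hI : I.OrdConnected) (f f' : ℝ → ℝ) (a b : ℝ)
    (ha : a ∈ I) (hb : b ∈ I) (hab : a < b)
    (hderiv : ∀ x ∈ interior I, HasDerivAt f (f' x) x)
    (hint : IntervalIntegrable f' volume a b)
    (hconv : ConvexOn ℝ (Set.Icc a b) (fun x => |f' x|)) :
    |(1 / (b - a)) * (∫ x in a..b, f x) - f ((a + b) / 2)| ≤
      (b - a) / 4 * ((|f' a| + |f' b|) / 2) := by
  have hIoo : Ioo a b ⊆ interior I :=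
    interior_maximal (Ioo_subset_Icc_self.trans (hI.out ha hb)) isOpen_Ioo
  have hderiv' : ∀ x ∈ Ioo a b, HasDerivAt f (f' x) x := fun x hx => hderiv x (hIoo hx)
  obtain ⟨F, hF, hfF⟩ := exists_continuousOn_Icc_eqOn_Ioo hab hderiv' hint
  have hFderiv : ∀ x ∈ Ioo a b, HasDerivAt F (f' x) x := fun x hx =>
    (hderiv' x hx).congr_of_eventuallyEq
      (Filter.eventuallyEq_of_mem (isOpen_Ioo.mem_nhds hx) hfF.symm)
  rw [integral_congr_Ioo_of_le hab.le hfF, hfF ⟨by linarith, by linarith⟩]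
  exact abs_average_sub_midpoint_le hab hF hFderiv hint hconv
end

section
/- Let f : I ⊆ ℝ → ℝ be a differentiable mapping on the interior I° of I, with a, b ∈ I°, a < b, and f' Lebesgue integrable on [a,b]. Let q ≥ 1. If |f'|^q is convex on [a,b], then |(1/(b−a)) ∫_a^b f(x) dx − f((a+b)/2)| ≤ ((b−a)/4) · [(|f'(a)|^q + |f'(b)|^q)/2]^{1/q}. -/
/-! Integrating by parts on each half of `[a, b]` turns the midpoint error into `∫ K f'`, where
`K x = x - a` on `[a, m]` and `K x = x - b` on `[m, b]`, `m = (a + b) / 2`. Reflecting the right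
half onto the left pairs `|f' x|` with `|f' (a + b - x)|`. Convexity of `|f'| ^ q` bounds
`|f' x| ^ q + |f' (a + b - x)| ^ q` by `|f' a| ^ q + |f' b| ^ q`, and the power mean inequality
turns this into `|f' x| + |f' (a + b - x)| ≤ 2 ((|f' a| ^ q + |f' b| ^ q) / 2) ^ (1 / q)`.
It remains to integrate the weight: `∫ x in a..m, (x - a) = (b - a) ^ 2 / 8`. -/

open MeasureTheory Set

lemma Real.add_le_two_mul_rpow_mean {u v q : ℝ} (hu : 0 ≤ u) (hv : 0 ≤ v) (hq : 1 ≤ q) :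
    u + v ≤ 2 * ((u ^ q + v ^ q) / 2) ^ (1 / q) := by
  have hq₀ : q ≠ 0 := by positivity
  have hconc := (Real.concaveOn_rpow (p := 1 / q) (by positivity)
    ((div_le_one (by positivity)).2 hq)).2 (Real.rpow_nonneg hu q) (Real.rpow_nonneg hv q)
    (by norm_num : (0 : ℝ) ≤ 1 / 2) (by norm_num : (0 : ℝ) ≤ 1 / 2) (by norm_num)
  simp only [smul_eq_mul, one_div, Real.rpow_rpow_inv hu hq₀, Real.rpow_rpow_inv hv hq₀] at hconc
  rw [one_div, show (u ^ q + v ^ q) / 2 = 2⁻¹ * u ^ q + 2⁻¹ * v ^ q by ring]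
  linarith

lemma ConvexOn.apply_add_apply_add_sub_le {φ : ℝ → ℝ} {a b x : ℝ}
    (hφ : ConvexOn ℝ (Icc a b) φ) (hx : x ∈ Icc a b) : φ x + φ (a + b - x) ≤ φ a + φ b := by
  have hab : a ≤ b := hx.1.trans hx.2
  have ha : a ∈ Icc a b := left_mem_Icc.2 hab
  have hb : b ∈ Icc a b := right_mem_Icc.2 hab
  rw [← segment_eq_Icc hab] at hx
  obtain ⟨s, t, hs, ht, hst, rfl⟩ := hx
  have hreflect : a + b - (s • a + t • b) = t • a + s • b := by
    simp only [smul_eq_mul]; linear_combination -(a + b) * hst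
  rw [hreflect]
  have h₁ := hφ.2 ha hb hs ht hst
  have h₂ := hφ.2 ha hb ht hs (by linarith)
  simp only [smul_eq_mul] at h₁ h₂ ⊢
  linear_combination h₁ + h₂ + (φ a + φ b) * hst

lemma integral_sub_mul_deriv_s17 {f f' : ℝ → ℝ} {c d : ℝ}
    (hf : ∀ x ∈ uIcc c d, HasDerivAt f (f' x) x) (hf' : IntervalIntegrable f' volume c d) :
    ∫ x in c..d, (x - c) * f' x = (d - c) * f d - ∫ x in c..d, f x := by
  simpa using intervalIntegral.integral_mul_deriv_eq_deriv_mul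
    (fun x _ => (hasDerivAt_id x).sub_const c) hf intervalIntegrable_const hf'

lemma integral_sub_mul_comp_add_sub (g : ℝ → ℝ) (a b c : ℝ) :
    ∫ x in a..c, (x - a) * g (a + b - x) = ∫ x in a + b - c..b, (b - x) * g x := by
  have h := intervalIntegral.integral_comp_sub_left (fun x => (b - x) * g x) (a + b) (a := a)
    (b := c)
  rw [add_sub_cancel_left] at h
  rw [← h]
  congr 1; ext x; ring_nf

/-- `∫ x in a..b, K x * g x` for the Peano kernel `K` of the midpoint rule, split at the
midpoint, where `K` jumps. -/
noncomputable def midpointKernelIntegral (g : ℝ → ℝ) (a b : ℝ) : ℝ :=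
  (∫ x in a..(a + b) / 2, (x - a) * g x) + ∫ x in (a + b) / 2..b, (x - b) * g x

lemma midpointKernelIntegral_deriv {f f' : ℝ → ℝ} {a b : ℝ} (hab : a ≤ b)
    (hf : ∀ x ∈ Icc a b, HasDerivAt f (f' x) x) (hf' : IntervalIntegrable f' volume a b) :
    midpointKernelIntegral f' a b = (b - a) * f ((a + b) / 2) - ∫ x in a..b, f x := by
  set m := (a + b) / 2 with hm
  have ham : a ≤ m := by linarith
  have hmb : m ≤ b := by linarith
  have hleft : uIcc a m ⊆ Icc a b := by
    rw [uIcc_of_le ham]; exact Icc_subset_Icc le_rfl hmb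
  have hright : uIcc b m ⊆ Icc a b := by
    rw [uIcc_of_ge hmb]; exact Icc_subset_Icc ham le_rfl
  have hcont : ContinuousOn f (Icc a b) := fun x hx => (hf x hx).continuousAt.continuousWithinAt
  have hint : ∀ {c d}, uIcc c d ⊆ Icc a b → IntervalIntegrable f volume c d := fun h =>
    (hcont.mono h).intervalIntegrable
  have hint' : ∀ {c d}, uIcc c d ⊆ Icc a b → IntervalIntegrable f' volume c d := fun h =>
    hf'.mono_set (by rwa [uIcc_of_le hab])
  have hright_eq : ∫ x in m..b, (x - b) * f' x = (b - m) * f m - ∫ x in m..b, f x := by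
    rw [intervalIntegral.integral_symm, integral_sub_mul_deriv_s17 (fun x hx => hf x (hright hx))
      (hint' hright), intervalIntegral.integral_symm b m]
    ring
  rw [midpointKernelIntegral, ← intervalIntegral.integral_add_adjacent_intervals (hint hleft)
    (hint (uIcc_comm b m ▸ hright)), integral_sub_mul_deriv_s17 (fun x hx => hf x (hleft hx))
    (hint' hleft), hright_eq]
  ring

lemma abs_midpointKernelIntegral_le {g : ℝ → ℝ} {a b M : ℝ} (hab : a ≤ b)
    (hg : IntervalIntegrable g volume a b)
    (hM : ∀ x ∈ Icc a b, |g x| + |g (a + b - x)| ≤ 2 * M) :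
    |midpointKernelIntegral g a b| ≤ M * ((b - a) ^ 2 / 4) := by
  set m := (a + b) / 2 with hm
  have ham : a ≤ m := by linarith
  have hmb : m ≤ b := by linarith
  have hmem : m ∈ uIcc a b := by rw [uIcc_of_le hab]; exact ⟨ham, hmb⟩
  have hint₁ : IntervalIntegrable (fun x => (x - a) * |g x|) volume a m :=
    (hg.mono_set (uIcc_subset_uIcc left_mem_uIcc hmem)).abs.continuousOn_mul (by fun_prop)
  have hint₂ : IntervalIntegrable (fun x => (x - a) * |g (a + b - x)|) volume a m := by
    have hreflect : IntervalIntegrable (fun x => g (a + b - x)) volume a b := by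
      have h := hg.comp_sub_left (a + b)
      simp only [add_sub_cancel_left, add_sub_cancel_right] at h
      exact h.symm
    exact (hreflect.mono_set (uIcc_subset_uIcc left_mem_uIcc hmem)).abs.continuousOn_mul
      (by fun_prop)
  have hleft : |∫ x in a..m, (x - a) * g x| ≤ ∫ x in a..m, (x - a) * |g x| := by
    refine intervalIntegral.norm_integral_le_of_norm_le (f := fun x => (x - a) * g x) ham
      (.of_forall fun x hx => ?_) hint₁
    rw [Real.norm_eq_abs, abs_mul, abs_of_nonneg (by linarith [hx.1])]
  have hright : |∫ x in m..b, (x - b) * g x| ≤ ∫ x in a..m, (x - a) * |g (a + b - x)| := by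
    rw [integral_sub_mul_comp_add_sub (fun x => |g x|), show a + b - m = m by linarith]
    refine intervalIntegral.norm_integral_le_of_norm_le (f := fun x => (x - b) * g x)
      (g := fun x => (b - x) * |g x|) hmb (.of_forall fun x hx => ?_)
      ((hg.mono_set (uIcc_subset_uIcc hmem right_mem_uIcc)).abs.continuousOn_mul (by fun_prop))
    rw [Real.norm_eq_abs, abs_mul, abs_sub_comm, abs_of_nonneg (by linarith [hx.2])]
  have hpair : ∫ x in a..m, (x - a) * (|g x| + |g (a + b - x)|) ≤
      ∫ x in a..m, (x - a) * (2 * M) := by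
    refine intervalIntegral.integral_mono_on ham (by simpa only [mul_add] using hint₁.add hint₂)
      (Continuous.intervalIntegrable (by fun_prop) _ _) fun x hx => ?_
    exact mul_le_mul_of_nonneg_left (hM x ⟨hx.1, hx.2.trans hmb⟩) (by linarith [hx.1])
  calc |midpointKernelIntegral g a b|
      ≤ |∫ x in a..m, (x - a) * g x| + |∫ x in m..b, (x - b) * g x| := abs_add_le _ _
    _ ≤ ∫ x in a..m, (x - a) * (|g x| + |g (a + b - x)|) := by
      simp only [mul_add]
      rw [intervalIntegral.integral_add hint₁ hint₂]
      exact add_le_add hleft hright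
    _ ≤ ∫ x in a..m, (x - a) * (2 * M) := hpair
    _ = M * ((b - a) ^ 2 / 4) := by
      simp [intervalIntegral.integral_mul_const]
      ring

theorem hermite_hadamard_first_deriv_abs_pow_convex
    (I : Set ℝ) (hI : I.OrdConnected) (f f' : ℝ → ℝ) (a b : ℝ)
    (ha : a ∈ interior I) (hb : b ∈ interior I) (hab : a < b)
    (hderiv : ∀ x ∈ interior I, HasDerivAt f (f' x) x)
    (hint : IntervalIntegrable f' volume a b)
    (q : ℝ) (hq : 1 ≤ q)
    (hconv : ConvexOn ℝ (Set.Icc a b) (fun x => |f' x| ^ q)) :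
    |(1 / (b - a)) * (∫ x in a..b, f x) - f ((a + b) / 2)| ≤
      (b - a) / 4 * ((|f' a| ^ q + |f' b| ^ q) / 2) ^ (1 / q) := by
  have hf : ∀ x ∈ Icc a b, HasDerivAt f (f' x) x := fun x hx =>
    hderiv x (hI.interior.out ha hb hx)
  have hpair : ∀ x ∈ Icc a b,
      |f' x| + |f' (a + b - x)| ≤ 2 * ((|f' a| ^ q + |f' b| ^ q) / 2) ^ (1 / q) := fun x hx =>
    (Real.add_le_two_mul_rpow_mean (abs_nonneg _) (abs_nonneg _) hq).trans <| by
      gcongr 2 * (?_ / 2) ^ _; exact hconv.apply_add_apply_add_sub_le hx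
  have hba : 0 < b - a := sub_pos.2 hab
  have herror : 1 / (b - a) * (∫ x in a..b, f x) - f ((a + b) / 2) =
      -(midpointKernelIntegral f' a b / (b - a)) := by
    rw [midpointKernelIntegral_deriv hab.le hf hint]; field_simp; ring
  rw [herror, abs_neg, abs_div, abs_of_pos hba, div_le_iff₀ hba]
  exact (abs_midpointKernelIntegral_le hab.le hint hpair).trans_eq (by ring)
end
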